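/- arXiv:1611.09003 — 4 statements merged into one kernel-verified Lean document; each statement's English description precedes it below -/
import Mathlib

section
/- Every apex ordering of a simple-triangle graph is a cocomparability ordering: if u precedes v precedes w in the apex ordering and triangles T(u) and T(w) intersect, then T(v) intersects T(u) or T(v) intersects T(w). -/
variable {V : Type*}

/-- A strict linear order (vertex ordering): irreflexive, transitive, total. -/
def IsLinearOrd (R : V → V → Prop) : Prop :=
  Irreflexive R ∧ Transitive R ∧ ∀ u v : V, u ≠ v → R u v ∨ R v u

/-- `R` is a cocomparability ordering of `G`. -/
def IsCocompOrdering (G : SimpleGraph V) (R : V → V → Prop) : Prop :=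
  ∀ u v w : V, R u v → R v w → G.Adj u w → G.Adj u v ∨ G.Adj v w

/-- `R` is a comparability ordering of `G`. -/
def IsCompOrdering (G : SimpleGraph V) (R : V → V → Prop) : Prop :=
  ∀ u v w : V, R u v → R v w → G.Adj u v → G.Adj v w → G.Adj u w

/-- `(u, v, w, x)` is a chordless 4-cycle of `G`. -/
def IsC4 (G : SimpleGraph V) (u v w x : V) : Prop :=
  ([u, v, w, x] : List V).Nodup ∧ G.Adj u v ∧ G.Adj v w ∧ G.Adj w x ∧ G.Adj x u ∧
  ¬ G.Adj u w ∧ ¬ G.Adj v x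

/-- The vertex ordering `R` of `G` fulfills the `C4` rule. -/
def C4Rule (G : SimpleGraph V) (R : V → V → Prop) : Prop :=
  ∀ u v w x : V, IsC4 G u v w x →
    ((R u v ↔ R w v) ∧ (R w v ↔ R w x) ∧ (R w x ↔ R u x))

/-- Four distinct vertices `u, v, w, x` induce a `2K2` in `G` with edges `uw`, `vx`. -/
def Is2K2 (G : SimpleGraph V) (u v w x : V) : Prop :=
  ([u, v, w, x] : List V).Nodup ∧ G.Adj u w ∧ G.Adj v x ∧
  ¬ G.Adj u v ∧ ¬ G.Adj v w ∧ ¬ G.Adj w x ∧ ¬ G.Adj u x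

/-- The vertex ordering `R` of `G` fulfills the `2K2` rule. -/
def TwoK2Rule (G : SimpleGraph V) (R : V → V → Prop) : Prop :=
  ∀ u v w x : V, Is2K2 G u v w x →
    ((R u v ↔ R w v) ∧ (R w v ↔ R w x) ∧ (R w x ↔ R u x))

/-- The triangle with apex at `(p, 1)` on the top line and base `[s, t]` on the
bottom line (points of the plane `ℝ × ℝ`). -/
def STriangle (p s t : ℝ) : Set (ℝ × ℝ) :=
  convexHull ℝ {((p, 1) : ℝ × ℝ), (s, 0), (t, 0)}

/-- `p`, `s`, `t` give a simple-triangle representation of `G`: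
vertices are adjacent iff their triangles (distinct vertices) intersect. -/
def IsSTRepresentation (G : SimpleGraph V) (p s t : V → ℝ) : Prop :=
  (∀ v, s v ≤ t v) ∧
  ∀ u v : V, G.Adj u v ↔
    u ≠ v ∧ (STriangle (p u) (s u) (t u) ∩ STriangle (p v) (s v) (t v)).Nonempty

/-- `G` is a simple-triangle graph. -/
def IsSimpleTriangleGraph (G : SimpleGraph V) : Prop :=
  ∃ p s t : V → ℝ, IsSTRepresentation G p s t

/-- `O` is an orientation of `G`. -/
def IsOrientation (G : SimpleGraph V) (O : V → V → Prop) : Prop :=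
  (∀ u v : V, O u v → G.Adj u v) ∧ ∀ u v : V, G.Adj u v → (O u v ↔ ¬ O v u)

/-- `c : ZMod n → V` is a chordless cycle of length `n` in `G`. -/
def IsChordlessCycle (G : SimpleGraph V) (n : ℕ) (c : ZMod n → V) : Prop :=
  Function.Injective c ∧ (∀ i : ZMod n, G.Adj (c i) (c (i + 1))) ∧
  ∀ i j : ZMod n, i ≠ j → i + 1 ≠ j → j + 1 ≠ i → ¬ G.Adj (c i) (c j)

/-- `O` is an alternating orientation of `G`: on every chordless cycle of length
at least 4 the directions of the edges alternate. -/
def IsAlternatingOrientation (G : SimpleGraph V) (O : V → V → Prop) : Prop :=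
  IsOrientation G O ∧
  ∀ n : ℕ, 4 ≤ n → ∀ c : ZMod n → V, IsChordlessCycle G n c →
    ∀ i : ZMod n, O (c i) (c (i + 1)) ↔ O (c (i + 2)) (c (i + 1))

/-- `O` is a transitive orientation of `G`. -/
def IsTransitiveOrientation (G : SimpleGraph V) (O : V → V → Prop) : Prop :=
  IsOrientation G O ∧ ∀ u v w : V, O u v → O v w → O u w

/-! At height `y ∈ [0, 1]` the triangle with apex `p` and base `[s, t]` has the horizontal slice
`[s (1 - y) + p y, t (1 - y) + p y]`, so two triangles meet iff their slices overlap at some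
height. Take a height `y` where the slices of `u` and `w` overlap. If the slice of `v` meets
neither, it lies entirely left of the slice of `u` or entirely right of that of `w`. At height `1`
the slices shrink to the apices `p u < p v < p w`, so the relevant endpoints change order between
`y` and `1`, and by the intermediate value theorem the triangle of `v` meets that of `u` or `w`. -/

open Set

lemma slice_left_le_right {p s t y : ℝ} (hst : s ≤ t) (hy : y ≤ 1) :
    s * (1 - y) + p * y ≤ t * (1 - y) + p * y := by
  gcongr

lemma mem_sTriangle_iff {p s t : ℝ} (hst : s ≤ t) {q : ℝ × ℝ} :
    q ∈ STriangle p s t ↔ q.2 ∈ Icc (0 : ℝ) 1 ∧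
      q.1 ∈ Icc (s * (1 - q.2) + p * q.2) (t * (1 - q.2) + p * q.2) := by
  constructor
  · intro hq
    refine convexHull_min (t := {q : ℝ × ℝ | q.2 ∈ Icc (0 : ℝ) 1 ∧
      q.1 ∈ Icc (s * (1 - q.2) + p * q.2) (t * (1 - q.2) + p * q.2)}) ?_ ?_ hq
    · rintro x (rfl | rfl | rfl) <;> simp [hst]
    · rintro a ⟨⟨ha0, ha1⟩, ha2, ha3⟩ b ⟨⟨hb0, hb1⟩, hb2, hb3⟩ α β hα hβ hαβ
      obtain rfl : β = 1 - α := by linarith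
      simp only [mem_ofPred_eq, mem_Icc, Prod.snd_add, Prod.fst_add, Prod.smul_snd,
        Prod.smul_fst, smul_eq_mul]
      refine ⟨⟨by positivity, by nlinarith⟩, ?_, ?_⟩
      · nlinarith [mul_le_mul_of_nonneg_left ha2 hα, mul_le_mul_of_nonneg_left hb2 hβ]
      · nlinarith [mul_le_mul_of_nonneg_left ha3 hα, mul_le_mul_of_nonneg_left hb3 hβ]
  · obtain ⟨x, y⟩ := q
    dsimp only
    rintro ⟨⟨hy0, hy1⟩, hx⟩
    have side_mem : ∀ a, ((a, 0) : ℝ × ℝ) ∈ ({(p, 1), (s, 0), (t, 0)} : Set (ℝ × ℝ)) →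
        ((a * (1 - y) + p * y, y) : ℝ × ℝ) ∈ STriangle p s t := by
      intro a ha
      rw [show ((a * (1 - y) + p * y, y) : ℝ × ℝ) = (1 - y) • (a, 0) + y • (p, 1) by
        ext <;> simp; ring]
      exact (convex_convexHull ℝ _) (subset_convexHull ℝ _ ha)
        (subset_convexHull ℝ _ (mem_insert _ _)) (sub_nonneg.2 hy1) hy0 (sub_add_cancel 1 y)
    have hslice : ((x, y) : ℝ × ℝ) ∈
        segment ℝ ((s * (1 - y) + p * y, y) : ℝ × ℝ) (t * (1 - y) + p * y, y) := by
      rw [← Prod.image_mk_segment_left, segment_eq_Icc (slice_left_le_right hst hy1)]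
      exact mem_image_of_mem _ hx
    exact (convex_convexHull ℝ _).segment_subset (side_mem s (by simp)) (side_mem t (by simp))
      hslice

lemma sTriangle_inter_nonempty_iff {p s t p' s' t' : ℝ} (hst : s ≤ t) (hst' : s' ≤ t') :
    (STriangle p s t ∩ STriangle p' s' t').Nonempty ↔ ∃ y ∈ Icc (0 : ℝ) 1,
      s * (1 - y) + p * y ≤ t' * (1 - y) + p' * y ∧
      s' * (1 - y) + p' * y ≤ t * (1 - y) + p * y := by
  constructor
  · rintro ⟨q, hq, hq'⟩
    obtain ⟨hy, hl, hr⟩ := (mem_sTriangle_iff hst).1 hq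
    obtain ⟨-, hl', hr'⟩ := (mem_sTriangle_iff hst').1 hq'
    exact ⟨q.2, hy, hl.trans hr', hl'.trans hr⟩
  · rintro ⟨y, hy, hle, hle'⟩
    refine ⟨(max (s * (1 - y) + p * y) (s' * (1 - y) + p' * y), y),
      (mem_sTriangle_iff hst).2 ⟨hy, le_max_left _ _, max_le (slice_left_le_right hst hy.2) hle'⟩,
      (mem_sTriangle_iff hst').2 ⟨hy, le_max_right _ _, max_le hle (slice_left_le_right hst' hy.2)⟩⟩

/-- The left side of the first triangle and the right side of the second swap order between
heights `y` and `1`, so they cross in between. -/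
lemma sTriangle_inter_nonempty_of_crossing {p s t p' s' t' y : ℝ} (hst : s ≤ t) (hst' : s' ≤ t')
    (hy : y ∈ Icc (0 : ℝ) 1) (hright : t' * (1 - y) + p' * y ≤ s * (1 - y) + p * y)
    (hp : p ≤ p') : (STriangle p s t ∩ STriangle p' s' t').Nonempty := by
  have hzero : (0 : ℝ) ∈ (fun z ↦ s * (1 - z) + p * z - (t' * (1 - z) + p' * z)) '' Icc y 1 :=
    intermediate_value_Icc' hy.2 (by fun_prop) ⟨by linarith, by linarith⟩
  obtain ⟨z, ⟨hyz, hz1⟩, hz⟩ := hzero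
  dsimp only at hz
  refine (sTriangle_inter_nonempty_iff hst hst').2 ⟨z, ⟨hy.1.trans hyz, hz1⟩, ?_, ?_⟩
  · linarith
  · linarith [slice_left_le_right (p := p) hst hz1, slice_left_le_right (p := p') hst' hz1]

theorem stmt7 {V : Type*} (p s t : V → ℝ) (hst : ∀ v, s v ≤ t v)
    (u v w : V) (huv : p u < p v) (hvw : p v < p w)
    (huw : (STriangle (p u) (s u) (t u) ∩ STriangle (p w) (s w) (t w)).Nonempty) :
    (STriangle (p v) (s v) (t v) ∩ STriangle (p u) (s u) (t u)).Nonempty ∨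
    (STriangle (p v) (s v) (t v) ∩ STriangle (p w) (s w) (t w)).Nonempty := by
  obtain ⟨y, hy, -, hwu⟩ := (sTriangle_inter_nonempty_iff (hst u) (hst w)).1 huw
  rcases lt_or_ge (t v * (1 - y) + p v * y) (s u * (1 - y) + p u * y) with hvu | hvu
  · left
    rw [inter_comm]
    exact sTriangle_inter_nonempty_of_crossing (hst u) (hst v) hy hvu.le huv.le
  rcases le_or_gt (s v * (1 - y) + p v * y) (t u * (1 - y) + p u * y) with huv' | huv'
  · exact Or.inl ((sTriangle_inter_nonempty_iff (hst v) (hst u)).2 ⟨y, hy, huv', hvu⟩)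
  right
  rcases lt_or_ge (t w * (1 - y) + p w * y) (s v * (1 - y) + p v * y) with hwv | hwv
  · exact sTriangle_inter_nonempty_of_crossing (hst v) (hst w) hy hwv.le hvw.le
  · refine (sTriangle_inter_nonempty_iff (hst v) (hst w)).2 ⟨y, hy, hwv, ?_⟩
    linarith [slice_left_le_right (p := p v) (hst v) hy.2]
end

section
/- A graph G is a simple-triangle graph if and only if its complement has a comparability ordering fulfilling the 2K2 rule. -/
variable {V : Type*}

namespace ST

def K (p s t : ℝ) : Set (ℝ × ℝ) :=
  {q | 0 ≤ q.2 ∧ q.2 ≤ 1 ∧ q.2*p + (1-q.2)*s ≤ q.1 ∧ q.1 ≤ q.2*p + (1-q.2)*t}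

lemma convex_K (p s t : ℝ) : Convex ℝ (K p s t) := by
  intro q1 h1 q2 h2 a b ha hb hab
  obtain ⟨h10, h11, h12, h13⟩ := h1
  obtain ⟨h20, h21, h22, h23⟩ := h2
  have hfst : (a • q1 + b • q2).1 = a * q1.1 + b * q2.1 := rfl
  have hsnd : (a • q1 + b • q2).2 = a * q1.2 + b * q2.2 := rfl
  have habs : a*s + b*s = s := by rw [← add_mul, hab, one_mul]
  have habt : a*t + b*t = t := by rw [← add_mul, hab, one_mul]
  have k12 := mul_le_mul_of_nonneg_left h12 ha
  have k22 := mul_le_mul_of_nonneg_left h22 hb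
  have k13 := mul_le_mul_of_nonneg_left h13 ha
  have k23 := mul_le_mul_of_nonneg_left h23 hb
  refine ⟨?_, ?_, ?_, ?_⟩ <;> simp only [hfst, hsnd] <;> nlinarith

lemma base_mem (p s t : ℝ) (hst : s ≤ t) {z : ℝ} (hz1 : s ≤ z) (hz2 : z ≤ t) :
    ((z, 0) : ℝ × ℝ) ∈ STriangle p s t := by
  have hB : ((s, 0) : ℝ × ℝ) ∈ STriangle p s t := subset_convexHull ℝ _ (by simp)
  have hC : ((t, 0) : ℝ × ℝ) ∈ STriangle p s t := subset_convexHull ℝ _ (by simp)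
  rcases eq_or_lt_of_le hst with h | h
  · have : z = s := le_antisymm (h ▸ hz2) hz1
    exact this ▸ hB
  · have hconv : Convex ℝ (STriangle p s t) := convex_convexHull ℝ _
    have hts : (0:ℝ) < t - s := by linarith
    have := hconv hB hC (a := (t - z)/(t-s)) (b := (z - s)/(t-s))
      (div_nonneg (by linarith) (by linarith)) (div_nonneg (by linarith) (by linarith))
      (by field_simp; ring)
    convert this using 1
    have h1 : ((t - z)/(t-s)) * s + ((z - s)/(t-s)) * t = z := by field_simp; ring
    have h2 : ((t - z)/(t-s)) * (0:ℝ) + ((z - s)/(t-s)) * (0:ℝ) = 0 := by ring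
    exact Prod.ext h1.symm h2.symm

lemma mem_STriangle {p s t : ℝ} (hst : s ≤ t) {q : ℝ × ℝ} :
    q ∈ STriangle p s t ↔
      0 ≤ q.2 ∧ q.2 ≤ 1 ∧ q.2*p + (1-q.2)*s ≤ q.1 ∧ q.1 ≤ q.2*p + (1-q.2)*t := by
  constructor
  · intro hq
    have hsub : STriangle p s t ⊆ K p s t := by
      apply convexHull_min _ (convex_K p s t)
      intro x hx
      simp only [Set.mem_insert_iff, Set.mem_singleton_iff] at hx
      rcases hx with rfl | rfl | rfl
      · exact ⟨by norm_num, by norm_num, by norm_num, by norm_num⟩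
      · exact ⟨le_refl 0, by norm_num, by norm_num, by norm_num; nlinarith⟩
      · exact ⟨le_refl 0, by norm_num, by norm_num; nlinarith, by norm_num⟩
    exact hsub hq
  · rintro ⟨h0, h1, h2, h3⟩
    rcases eq_or_lt_of_le h1 with hy1 | hy1
    · -- q.2 = 1, so q = (p, 1)
      rw [hy1] at h2 h3
      have hx : q.1 = p := by nlinarith
      have : q = ((p,1) : ℝ × ℝ) := Prod.ext hx hy1
      rw [this]
      exact subset_convexHull ℝ _ (by simp)
    · set y := q.2 with hy
      have h1y : (0:ℝ) < 1 - y := by linarith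
      set z := (q.1 - y*p)/(1-y) with hz
      have hzs : s ≤ z := by rw [hz, le_div_iff₀ h1y]; nlinarith
      have hzt : z ≤ t := by rw [hz, div_le_iff₀ h1y]; nlinarith
      have hzmem := base_mem p s t hst hzs hzt
      have hA : ((p, 1) : ℝ × ℝ) ∈ STriangle p s t := subset_convexHull ℝ _ (by simp)
      have hconv : Convex ℝ (STriangle p s t) := convex_convexHull ℝ _
      have := hconv hA hzmem (a := y) (b := 1 - y) h0 (by linarith) (by ring)
      convert this using 1
      refine Prod.ext ?_ ?_
      · show q.1 = y * p + (1-y) * z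
        rw [hz]; field_simp; ring
      · show q.2 = y * 1 + (1-y) * 0
        rw [← hy]; ring

/-- convex combination of two positives is positive -/
lemma convex_pos {A B y : ℝ} (hA : 0 < A) (hB : 0 < B) (h0 : 0 ≤ y) (h1 : y ≤ 1) :
    0 < y*A + (1-y)*B := by
  rcases eq_or_lt_of_le h0 with h | h
  · rw [← h]; linarith
  · nlinarith [mul_pos h hA, mul_nonneg (by linarith : (0:ℝ) ≤ 1-y) hB.le]

/-- pointwise separation: if strictly separated at heights 0 and 1, then at all y in [0,1] -/
lemma sep_pointwise {pa ta pb sb y : ℝ} (h1 : pa < pb) (h2 : ta < sb) (h0 : 0 ≤ y) (hy : y ≤ 1) :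
    y*pa + (1-y)*ta < y*pb + (1-y)*sb := by
  have := convex_pos (sub_pos.2 h1) (sub_pos.2 h2) h0 hy
  nlinarith

lemma lin_pos' {A B y1 y2 : ℝ} (h1 : y1*A + (1-y1)*B ≤ 0) (h2 : 0 < y2*A+(1-y2)*B)
    (hy : y1 < y2) (hy2 : y2 ≤ 1) : 0 < A := by
  have hs : 0 < A - B := by
    by_contra hc
    push_neg at hc
    nlinarith [mul_nonpos_of_nonneg_of_nonpos (by linarith : (0:ℝ) ≤ y2 - y1) hc]
  nlinarith [mul_nonneg (by linarith : (0:ℝ) ≤ 1 - y2) hs.le]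

lemma lin_neg' {A B y1 y2 : ℝ} (h1 : 0 ≤ y1*A + (1-y1)*B) (h2 : y2*A+(1-y2)*B < 0)
    (hy : y1 < y2) (hy2 : y2 ≤ 1) : A < 0 := by
  have := lin_pos' (A := -A) (B := -B) (y1 := y1) (y2 := y2)
    (by nlinarith) (by nlinarith) hy hy2
  linarith

lemma lin_aux {A B y1 y2 : ℝ} (h1 : y1*A + (1-y1)*B < 0) (h2 : 0 ≤ y2*A+(1-y2)*B)
    (hy : y1 < y2) (hy2 : y2 ≤ 1) : 0 < A ∨ (A = 0 ∧ B < 0) := by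
  have hs : 0 < A - B := by
    by_contra hc
    push_neg at hc
    nlinarith [mul_nonpos_of_nonneg_of_nonpos (by linarith : (0:ℝ) ≤ y2 - y1) hc]
  rcases lt_trichotomy A 0 with h | h | h
  · exfalso
    nlinarith [mul_nonneg (by linarith : (0:ℝ) ≤ 1 - y2) hs.le]
  · exact Or.inr ⟨h, by linarith⟩
  · exact Or.inl h

lemma lin_aux' {A B y1 y2 : ℝ} (h1 : 0 < y1*A + (1-y1)*B) (h2 : y2*A+(1-y2)*B ≤ 0)
    (hy : y1 < y2) (hy2 : y2 ≤ 1) : A < 0 ∨ (A = 0 ∧ 0 < B) := by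
  have := lin_aux (A := -A) (B := -B) (y1 := y1) (y2 := y2)
    (by nlinarith) (by nlinarith) hy hy2
  rcases this with h | ⟨h1, h2⟩
  · exact Or.inl (by linarith)
  · exact Or.inr ⟨by linarith, by linarith⟩

/-- helper: if apexes satisfy pu < pv and bases satisfy sv ≤ tu, triangles meet -/
lemma overlap_point {pu su tu pv sv tv : ℝ} (hu : su ≤ tu) (hv : sv ≤ tv)
    (hp : pu < pv) (h2 : sv ≤ tu) :
    (STriangle pu su tu ∩ STriangle pv sv tv).Nonempty := by
  rcases le_or_gt su tv with h3 | h3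
  · refine ⟨(max su sv, 0), ?_, ?_⟩
    · rw [mem_STriangle hu]
      refine ⟨le_refl 0, by norm_num, by simp, by simp; exact ⟨by linarith, by linarith⟩⟩
    · rw [mem_STriangle hv]
      refine ⟨le_refl 0, by norm_num, by simp, by simp; exact ⟨by linarith, by linarith⟩⟩
  · set D := (pv - pu) + (su - tv) with hD
    have hD0 : 0 < D := by simp [hD]; linarith
    set y := (su - tv)/D with hy
    have hy0 : 0 < y := div_pos (by linarith) hD0
    have hy1 : y < 1 := by
      rw [hy, div_lt_one hD0]; simp [hD]; linarith
    have hx : y*pu + (1-y)*su = y*pv + (1-y)*tv := by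
      rw [hy]; field_simp; ring
    refine ⟨(y*pu + (1-y)*su, y), ?_, ?_⟩
    · rw [mem_STriangle hu]
      dsimp only
      refine ⟨hy0.le, hy1.le, le_refl _, by nlinarith⟩
    · rw [mem_STriangle hv]
      dsimp only
      refine ⟨hy0.le, hy1.le, by nlinarith [hx], le_of_eq hx⟩

/-- cross-section characterization of intersection of two triangles -/
lemma inter_nonempty_iff {pu su tu pv sv tv : ℝ} (hu : su ≤ tu) (hv : sv ≤ tv) :
    (STriangle pu su tu ∩ STriangle pv sv tv).Nonempty ↔
      ¬((pu < pv ∧ tu < sv) ∨ (pv < pu ∧ tv < su)) := by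
  constructor
  · rintro ⟨q, hqu, hqv⟩ (⟨h1, h2⟩ | ⟨h1, h2⟩)
    · rw [mem_STriangle hu] at hqu
      rw [mem_STriangle hv] at hqv
      have := sep_pointwise h1 h2 hqu.1 hqu.2.1
      linarith [hqu.2.2.2, hqv.2.2.1]
    · rw [mem_STriangle hu] at hqu
      rw [mem_STriangle hv] at hqv
      have := sep_pointwise h1 h2 hqv.1 hqv.2.1
      linarith [hqv.2.2.2, hqu.2.2.1]
  · intro h
    push_neg at h
    rcases lt_trichotomy pu pv with hp | hp | hp
    · exact overlap_point hu hv hp (h.1 hp)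
    · refine ⟨(pu, 1), ?_, ?_⟩
      · rw [mem_STriangle hu]; norm_num
      · rw [mem_STriangle hv]; rw [hp]; norm_num
    · rw [Set.inter_comm]
      exact overlap_point hv hu hp (h.2 hp)

/-- a point in the intersection gives a common cross-section height -/
lemma exists_cross {pu su tu pv sv tv : ℝ} (hu : su ≤ tu) (hv : sv ≤ tv)
    (h : (STriangle pu su tu ∩ STriangle pv sv tv).Nonempty) :
    ∃ y, 0 ≤ y ∧ y ≤ 1 ∧ y*pu + (1-y)*su ≤ y*pv + (1-y)*tv ∧
      y*pv + (1-y)*sv ≤ y*pu + (1-y)*tu := by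
  obtain ⟨q, hqu, hqv⟩ := h
  rw [mem_STriangle hu] at hqu
  rw [mem_STriangle hv] at hqv
  exact ⟨q.2, hqu.1, hqu.2.1, by linarith [hqu.2.2.1, hqv.2.2.2],
    by linarith [hqv.2.2.1, hqu.2.2.2]⟩

/-- Main geometric lemma for the 2K2 rule: u ≪ w, v ≪ x, with v meeting w and x meeting u. -/
lemma ML {pu tu pw sw tw pv tv px sx tx : ℝ}
    (hsw : sw ≤ tw) (hsx : sx ≤ tx)
    (huw1 : pu < pw) (huw2 : tu < sw)
    (hvx1 : pv < px) (hvx2 : tv < sx)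
    {b : ℝ} (hb0 : 0 ≤ b) (hb1 : b ≤ 1) (hvwb : b*pw + (1-b)*sw ≤ b*pv + (1-b)*tv)
    {d : ℝ} (hd0 : 0 ≤ d) (hd1 : d ≤ 1) (hxud : d*px + (1-d)*sx ≤ d*pu + (1-d)*tu) :
    (pv < pu ∧ pv < pw ∧ px < pw ∧ (px < pu ∨ (px = pu ∧ tu < tx)))
    ∨ (pu < pv ∧ (pw < pv ∨ (pw = pv ∧ tv < tw)) ∧ pw < px ∧ pu < px) := by
  have huwb : b*pu+(1-b)*tu < b*pw+(1-b)*sw := sep_pointwise huw1 huw2 hb0 hb1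
  have huwd : d*pu+(1-d)*tu < d*pw+(1-d)*sw := sep_pointwise huw1 huw2 hd0 hd1
  have hvxb : b*pv+(1-b)*tv < b*px+(1-b)*sx := sep_pointwise hvx1 hvx2 hb0 hb1
  have hvxd : d*pv+(1-d)*tv < d*px+(1-d)*sx := sep_pointwise hvx1 hvx2 hd0 hd1
  -- h := Ru - Rv
  have hhb : b*(pu-pv) + (1-b)*(tu-tv) < 0 := by linarith
  have hhd : 0 < d*(pu-pv) + (1-d)*(tu-tv) := by linarith
  -- k := Lw - Lx
  have hkb : b*(pw-px) + (1-b)*(sw-sx) < 0 := by linarith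
  have hkd : 0 < d*(pw-px) + (1-d)*(sw-sx) := by linarith
  -- m := Lw - Rv
  have hmb : b*(pw-pv) + (1-b)*(sw-tv) ≤ 0 := by linarith
  have hmd : 0 < d*(pw-pv) + (1-d)*(sw-tv) := by linarith
  -- n := Ru - Lx
  have hnb : b*(pu-px) + (1-b)*(tu-sx) < 0 := by linarith
  have hnd : 0 ≤ d*(pu-px) + (1-d)*(tu-sx) := by linarith
  rcases lt_trichotomy b d with hbd | hbd | hbd
  · left
    have h1 : 0 < pu - pv := lin_pos' hhb.le hhd hbd hd1
    have h2 : 0 < pw - pv := lin_pos' hmb hmd hbd hd1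
    have h3 : 0 < pw - px := lin_pos' hkb.le hkd hbd hd1
    have h4 := lin_aux hnb hnd hbd hd1
    refine ⟨by linarith, by linarith, by linarith, ?_⟩
    rcases h4 with h4 | ⟨h4, h5⟩
    · exact Or.inl (by linarith)
    · exact Or.inr ⟨by linarith, by linarith⟩
  · exfalso; rw [hbd] at hhb; linarith
  · right
    have h1 : pu - pv < 0 := lin_neg' hhd.le hhb hbd hb1
    have h2 := lin_aux' hmd hmb hbd hb1
    have h3 : pw - px < 0 := lin_neg' hkd.le hkb hbd hb1
    have h4 : pu - px < 0 := lin_neg' hnd hnb hbd hb1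
    refine ⟨by linarith, ?_, by linarith, by linarith⟩
    rcases h2 with h2 | ⟨h2, h5⟩
    · exact Or.inl (by linarith)
    · exact Or.inr ⟨by linarith, by linarith⟩

theorem forward {V : Type*} [Fintype V] (G : SimpleGraph V) (p s t : V → ℝ)
    (hst : ∀ v, s v ≤ t v)
    (hadj : ∀ u v : V, G.Adj u v ↔
      u ≠ v ∧ (STriangle (p u) (s u) (t u) ∩ STriangle (p v) (s v) (t v)).Nonempty) :
    ∃ R : V → V → Prop, IsLinearOrd R ∧ IsCompOrdering Gᶜ R ∧ TwoK2Rule Gᶜ R := by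
  classical
  let e := Fintype.equivFin V
  set R : V → V → Prop := fun u v =>
    toLex (p u, toLex (-(t u), e u)) < toLex (p v, toLex (-(t v), e v)) with hRdef
  have hR_iff : ∀ u v, R u v ↔
      (p u < p v ∨ (p u = p v ∧ (t v < t u ∨ (t v = t u ∧ e u < e v)))) := by
    intro u v
    rw [hRdef]
    simp only [Prod.Lex.lt_iff, ofLex_toLex, neg_lt_neg_iff, neg_inj]
    tauto
  have hRle : ∀ u v, R u v → p u ≤ p v := by
    intro u v h
    rcases (hR_iff u v).1 h with h | ⟨h, _⟩
    · exact h.le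
    · exact h.le
  have hRp : ∀ u v, p u < p v → R u v := fun u v h => (hR_iff u v).2 (Or.inl h)
  have hnR : ∀ u v, p v < p u → ¬R u v := fun u v h hc => absurd (hRle u v hc) (not_le.2 h)
  -- linear order
  have hlin : IsLinearOrd R := by
    refine ⟨fun u => by simp [hRdef], fun u v w h1 h2 => lt_trans h1 h2, fun u v huv => ?_⟩
    rcases lt_trichotomy (toLex (p u, toLex (-(t u), e u))) (toLex (p v, toLex (-(t v), e v)))
      with h | h | h
    · exact Or.inl h
    · exfalso
      apply huv
      have h1 := toLex.injective h
      have h2 : toLex (-(t u), e u) = toLex (-(t v), e v) := congrArg Prod.snd h1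
      have h3 := toLex.injective h2
      have h4 : e u = e v := congrArg Prod.snd h3
      exact e.injective h4
    · exact Or.inr h
  -- disjointness from complement adjacency
  have hdisj : ∀ u v, Gᶜ.Adj u v →
      (p u < p v ∧ t u < s v) ∨ (p v < p u ∧ t v < s u) := by
    intro u v h
    rw [SimpleGraph.compl_adj] at h
    have hne := h.1
    have : ¬(STriangle (p u) (s u) (t u) ∩ STriangle (p v) (s v) (t v)).Nonempty := by
      intro hc
      exact h.2 ((hadj u v).2 ⟨hne, hc⟩)
    rw [inter_nonempty_iff (hst u) (hst v)] at this
    tauto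
  have hmeet : ∀ u v, G.Adj u v →
      (STriangle (p u) (s u) (t u) ∩ STriangle (p v) (s v) (t v)).Nonempty := by
    intro u v h
    exact ((hadj u v).1 h).2
  have hGadj : ∀ a b : V, a ≠ b → ¬Gᶜ.Adj a b → G.Adj a b := by
    intro a b hne h
    rw [SimpleGraph.compl_adj] at h
    push_neg at h
    exact h hne
  refine ⟨R, hlin, ?_, ?_⟩
  · -- comparability ordering of the complement
    intro u v w huv hvw hauv havw
    have h1 : p u < p v ∧ t u < s v := by
      rcases hdisj u v hauv with h | h
      · exact h
      · exact absurd (hRle u v huv) (not_le.2 h.1)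
    have h2 : p v < p w ∧ t v < s w := by
      rcases hdisj v w havw with h | h
      · exact h
      · exact absurd (hRle v w hvw) (not_le.2 h.1)
    rw [SimpleGraph.compl_adj]
    constructor
    · intro hc; rw [hc] at h1; linarith [h1.1, h2.1]
    · intro hc
      have := hmeet u w hc
      rw [inter_nonempty_iff (hst u) (hst w)] at this
      exact this (Or.inl ⟨h1.1.trans h2.1, by linarith [h1.2, h2.2, hst v]⟩)
  · -- 2K2 rule
    intro u v w x h2
    obtain ⟨hnd, haduw, hadvx, hn1, hn2, hn3, hn4⟩ := h2
    simp only [List.nodup_cons, List.mem_cons, List.mem_singleton, List.not_mem_nil,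
      or_false, not_or, List.nodup_nil, and_true, List.mem_singleton] at hnd
    obtain ⟨⟨huv, huw, hux⟩, ⟨hvw, hvx⟩, hwx, -⟩ := hnd
    -- all four G-edges of the C4
    have guv : G.Adj u v := hGadj u v huv hn1
    have gvw : G.Adj v w := hGadj v w hvw hn2
    have gwx : G.Adj w x := hGadj w x hwx hn3
    have gux : G.Adj u x := hGadj u x hux hn4
    -- key: apply ML in a fixed orientation
    have key : ∀ a b c d : V, Gᶜ.Adj a c → Gᶜ.Adj b d →
        G.Adj b c → G.Adj d a → p a < p c → p b < p d →
        ((¬R a b ∧ ¬R c b ∧ ¬R c d ∧ ¬R a d) ∨ (R a b ∧ R c b ∧ R c d ∧ R a d)) := by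
      intro a b c d hac hbd gbc gda hpac hpbd
      have hac' : t a < s c := by
        rcases hdisj a c hac with h | h
        · exact h.2
        · linarith [h.1]
      have hbd' : t b < s d := by
        rcases hdisj b d hbd with h | h
        · exact h.2
        · linarith [h.1]
      obtain ⟨β, hβ0, hβ1, hβ2, _⟩ := exists_cross (hst c) (hst b) (hmeet c b gbc.symm)
      obtain ⟨δ, hδ0, hδ1, hδ2, _⟩ := exists_cross (hst d) (hst a) (hmeet d a gda)
      rcases ML (hst c) (hst d) hpac hac' hpbd hbd' hβ0 hβ1 hβ2 hδ0 hδ1 hδ2 with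
        ⟨k1, k2, k3, k4⟩ | ⟨k1, k2, k3, k4⟩
      · left
        refine ⟨hnR a b k1, hnR c b k2, hnR c d k3, ?_⟩
        rcases k4 with k4 | ⟨k4, k5⟩
        · exact hnR a d k4
        · intro hc
          rcases (hR_iff a d).1 hc with h | ⟨_, h | ⟨h, _⟩⟩
          · rw [k4] at h; exact lt_irrefl _ h
          · linarith
          · linarith
      · right
        refine ⟨hRp a b k1, ?_, hRp c d k3, hRp a d k4⟩
        rcases k2 with k2 | ⟨k2, k5⟩
        · exact hRp c b k2
        · exact (hR_iff c b).2 (Or.inr ⟨k2, Or.inl k5⟩)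
    have main : (R u v ∧ R w v ∧ R w x ∧ R u x) ∨ (¬R u v ∧ ¬R w v ∧ ¬R w x ∧ ¬R u x) := by
      rcases lt_or_ge (p u) (p w) with hpuw | hpuw
      · rcases lt_or_ge (p v) (p x) with hpvx | hpvx
        · rcases key u v w x haduw hadvx gvw gux.symm hpuw hpvx with h | h
          · exact Or.inr h
          · exact Or.inl h
        · have hpxv : p x < p v := by
            rcases hdisj v x hadvx with h | h
            · linarith [h.1]
            · exact h.1
          rcases key u x w v haduw hadvx.symm gwx.symm guv.symm hpuw hpxv with ⟨h1,h2,h3,h4⟩ | ⟨h1,h2,h3,h4⟩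
          · exact Or.inr ⟨h4, h3, h2, h1⟩
          · exact Or.inl ⟨h4, h3, h2, h1⟩
      · have hpwu : p w < p u := by
          rcases hdisj u w haduw with h | h
          · linarith [h.1]
          · exact h.1
        rcases lt_or_ge (p v) (p x) with hpvx | hpvx
        · rcases key w v u x haduw.symm hadvx guv.symm gwx.symm hpwu hpvx with ⟨h1,h2,h3,h4⟩ | ⟨h1,h2,h3,h4⟩
          · exact Or.inr ⟨h2, h1, h4, h3⟩
          · exact Or.inl ⟨h2, h1, h4, h3⟩
        · have hpxv : p x < p v := by
            rcases hdisj v x hadvx with h | h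
            · linarith [h.1]
            · exact h.1
          rcases key w x u v haduw.symm hadvx.symm gux.symm gvw hpwu hpxv with ⟨h1,h2,h3,h4⟩ | ⟨h1,h2,h3,h4⟩
          · exact Or.inr ⟨h3, h4, h1, h2⟩
          · exact Or.inl ⟨h3, h4, h1, h2⟩
    rcases main with ⟨h1, h2, h3, h4⟩ | ⟨h1, h2, h3, h4⟩ <;>
      exact ⟨by tauto, by tauto, by tauto⟩

section Converse

variable {V : Type*} (G : SimpleGraph V) (R : V → V → Prop)

/-- the orientation of the complement induced by `R` -/
def Ori (u v : V) : Prop := Gᶜ.Adj u v ∧ R u v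

/-- `v'` is an endpoint-constraint predecessor of `u` -/
def Wa (u v' : V) : Prop := v' = u ∨ (G.Adj u v' ∧ R u v')

def Pa (v' v : V) : Prop := ∃ u, Ori G R u v ∧ Wa G R u v'

variable {G R}

lemma Rasymm (hlin : IsLinearOrd R) {u v : V} (h : R u v) : ¬ R v u :=
  fun hc => hlin.1 u (hlin.2.1 h hc)

lemma Otrans (hlin : IsLinearOrd R) (hcomp : IsCompOrdering Gᶜ R) {u v w : V}
    (h1 : Ori G R u v) (h2 : Ori G R v w) : Ori G R u w :=
  ⟨hcomp u v w h1.2 h2.2 h1.1 h2.1, hlin.2.1 h1.2 h2.2⟩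

lemma O_not_adj {u v : V} (h : Ori G R u v) : ¬ G.Adj u v := by
  have := h.1
  rw [SimpleGraph.compl_adj] at this
  exact this.2

lemma O_ne {u v : V} (h : Ori G R u v) : u ≠ v := h.1.ne

lemma adj_not_cadj {u v : V} (h : G.Adj u v) : ¬ Gᶜ.Adj u v := by
  rw [SimpleGraph.compl_adj]
  push_neg
  intro _
  exact h

lemma cadj_total (hlin : IsLinearOrd R) {u v : V} (h : Gᶜ.Adj u v) :
    Ori G R u v ∨ Ori G R v u := by
  rcases hlin.2.2 u v h.ne with hr | hr
  · exact Or.inl ⟨h, hr⟩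
  · exact Or.inr ⟨h.symm, hr⟩

lemma not_cadj_adj {u v : V} (hne : u ≠ v) (h : ¬ Gᶜ.Adj u v) : G.Adj u v := by
  rw [SimpleGraph.compl_adj] at h
  push_neg at h
  exact h hne

/-- The key shortcut lemma, using the 2K2 rule. -/
lemma shortcut (hlin : IsLinearOrd R) (hcomp : IsCompOrdering Gᶜ R)
    (hrule : TwoK2Rule Gᶜ R) {u1 v0 v1 u2 v2 : V}
    (h1 : Ori G R u1 v1) (hw1 : Wa G R u1 v0)
    (h2 : Ori G R u2 v2) (hw2 : Wa G R u2 v1) :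
    Ori G R u1 v2 ∨ R u2 u1 := by
  rcases hw2 with rfl | ⟨hadj21, hr21⟩
  · -- v1 = u2
    exact Or.inl (Otrans hlin hcomp h1 h2)
  · by_cases h12 : u1 = u2
    · exact absurd hadj21 (h12 ▸ O_not_adj h1)
    by_cases hGc : Gᶜ.Adj u1 u2
    · rcases cadj_total hlin hGc with ho | ho
      · exact Or.inl (Otrans hlin hcomp ho h2)
      · exact absurd hadj21 (O_not_adj (Otrans hlin hcomp ho h1))
    have gu12 : G.Adj u1 u2 := not_cadj_adj h12 hGc
    by_cases hv12 : v1 = v2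
    · exact absurd (hv12 ▸ hadj21) (O_not_adj h2)
    by_cases hGc2 : Gᶜ.Adj v1 v2
    · rcases cadj_total hlin hGc2 with ho | ho
      · exact Or.inl (Otrans hlin hcomp h1 ho)
      · exact absurd hadj21 (O_not_adj (Otrans hlin hcomp h2 ho))
    have gv12 : G.Adj v1 v2 := not_cadj_adj hv12 hGc2
    by_cases h1v2 : u1 = v2
    · exact Or.inr (h1v2 ▸ h2.2)
    by_cases hGc3 : Gᶜ.Adj u1 v2
    · rcases cadj_total hlin hGc3 with ho | ho
      · exact Or.inl ho
      · exact absurd gv12.symm (O_not_adj (Otrans hlin hcomp ho h1))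
    have gu1v2 : G.Adj u1 v2 := not_cadj_adj h1v2 hGc3
    -- now u1 u2 v1 v2 is a 2K2 in the complement
    have h2k2 : Is2K2 Gᶜ u1 u2 v1 v2 := by
      refine ⟨?_, h1.1, h2.1, adj_not_cadj gu12, adj_not_cadj hadj21,
        adj_not_cadj gv12, adj_not_cadj gu1v2⟩
      simp only [List.nodup_cons, List.mem_cons, List.mem_singleton, List.not_mem_nil,
        or_false, not_or, List.nodup_nil, and_true]
      exact ⟨⟨h12, O_ne h1, h1v2⟩, ⟨hadj21.ne, O_ne h2⟩, hv12, not_false⟩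
    obtain ⟨e1, e2, e3⟩ := hrule u1 u2 v1 v2 h2k2
    have hnv1u2 : ¬ R v1 u2 := fun hc => Rasymm hlin hr21 hc
    have hnu1u2 : ¬ R u1 u2 := fun hc => hnv1u2 (e1.1 hc)
    rcases hlin.2.2 u1 u2 h12 with hr | hr
    · exact absurd hr hnu1u2
    · exact Or.inr hr

end Converse

section Acyc

variable {V : Type*} {G : SimpleGraph V} {R : V → V → Prop}

lemma noPself (hlin : IsLinearOrd R) (v : V) : ¬ Pa G R v v := by
  rintro ⟨u, hO, hW⟩
  rcases hW with rfl | ⟨hadj, _⟩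
  · exact hlin.1 _ hO.2
  · exact O_not_adj hO hadj

/-- there is a periodic sequence realizing a `Pa`-cycle of length `n` -/
def CycLen (G : SimpleGraph V) (R : V → V → Prop) (n : ℕ) : Prop :=
  ∃ f : ℕ → V, (∀ i, f (i + n) = f i) ∧ ∀ i, Pa G R (f i) (f (i + 1))

lemma noPcycle [Fintype V] (hlin : IsLinearOrd R) (hcomp : IsCompOrdering Gᶜ R)
    (hrule : TwoK2Rule Gᶜ R) : ∀ n, 0 < n → ¬ CycLen G R n := by
  intro n
  induction n using Nat.strong_induction_on with
  | _ n ih =>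
  intro hn hcyc
  obtain ⟨f, hper, harc⟩ := hcyc
  rcases Nat.lt_or_ge n 2 with hn2 | hn2
  · -- n = 1
    have hn1 : n = 1 := by omega
    have h0 := harc 0
    rw [hn1] at hper
    rw [show (0:ℕ) + 1 = 0 + 1 from rfl, hper 0] at h0
    exact noPself hlin (f 0) h0
  · simp only [Pa] at harc
    choose u hu using harc
    by_cases hsc : ∃ i, Ori G R (u i) (f (i + 2))
    · -- shortcut: build a cycle of length n - 1
      obtain ⟨i, hsci⟩ := hsc
      apply ih (n-1) (by omega) (by omega)
      have hm : 0 < n - 1 := by omega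
      refine ⟨fun j => f (i + 2 + (j % (n-1))), fun j => ?_, fun j => ?_⟩
      · show f (i + 2 + ((j + (n-1)) % (n-1))) = f (i + 2 + (j % (n-1)))
        rw [Nat.add_mod_right]
      · show Pa G R (f (i + 2 + (j % (n-1)))) (f (i + 2 + ((j + 1) % (n-1))))
        have hr : j % (n-1) < n - 1 := Nat.mod_lt _ hm
        have hmod : (j + 1) % (n-1) = (j % (n-1) + 1) % (n-1) := (Nat.mod_add_mod j (n-1) 1).symm
        rcases Nat.lt_or_ge (j % (n-1) + 1) (n-1) with hlt | hge
        · rw [hmod, Nat.mod_eq_of_lt hlt]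
          rw [show i + 2 + (j % (n-1) + 1) = (i + 2 + j % (n-1)) + 1 by ring]
          exact ⟨u _, hu _⟩
        · have heq : j % (n-1) + 1 = n - 1 := by omega
          rw [hmod, heq, Nat.mod_self]
          rw [show i + 2 + (j % (n-1)) = i + n by omega, hper i]
          exact ⟨u i, hsci, (hu i).2⟩
    · -- no shortcut anywhere: R-descent forever
      push_neg at hsc
      have hdesc : ∀ i, R (u (i+1)) (u i) := by
        intro i
        rcases shortcut hlin hcomp hrule (hu i).1 (hu i).2 (hu (i+1)).1 (hu (i+1)).2 with h | h
        · exact absurd (by rwa [show i + 1 + 1 = i + 2 from rfl] at h) (hsc i)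
        · exact h
      have hchain : ∀ i j, i < j → R (u j) (u i) := by
        intro i j hij
        induction j with
        | zero => omega
        | succ k ihk =>
          rcases Nat.lt_or_ge i k with h | h
          · exact hlin.2.1 (hdesc k) (ihk h)
          · have : i = k := by omega
            rw [this]
            exact hdesc k
      obtain ⟨a, b, hab, heq⟩ := Finite.exists_ne_map_eq_of_infinite u
      rcases Nat.lt_or_ge a b with h | h
      · exact hlin.1 (u a) (heq ▸ hchain a b h)
      · have h' : b < a := by omega
        exact hlin.1 (u b) (heq.symm ▸ hchain b a h')

/-- no `TransGen` loops: acyclicity of `Pa` -/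
lemma acyclic [Fintype V] (hlin : IsLinearOrd R) (hcomp : IsCompOrdering Gᶜ R)
    (hrule : TwoK2Rule Gᶜ R) (v : V) : ¬ Relation.TransGen (Pa G R) v v := by
  intro htg
  obtain ⟨c, hvc, hrt⟩ := Relation.TransGen.head'_iff.1 htg
  obtain ⟨l, hchain, hlast⟩ := List.exists_isChain_cons_of_relationReflTransGen hrt
  set L : List V := v :: c :: l with hL
  have hchainL : List.Chain (Pa G R) v (c :: l) := List.Chain.cons hvc hchain
  set n : ℕ := (c :: l).length with hn
  have hn0 : 0 < n := by simp [hn]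
  have hLlen : L.length = n + 1 := by simp [hL, hn]
  -- getD n = v (the cycle closes)
  have hgetn : L.getD n v = v := by
    rw [List.getD_eq_getElem L v (by omega)]
    have h1 : L[n] = L.getLast (by simp [hL]) := by
      rw [List.getLast_eq_getElem]
      have h3 : L.length - 1 = n := by omega
      simp only [h3]
    rw [h1]
    exact (List.getLast_cons (by simp)).trans hlast
  have hget0 : L.getD 0 v = v := by simp [hL]
  -- step property
  have harc' : ∀ k, k < n → Pa G R (L.getD k v) (L.getD (k+1) v) := by
    intro k hk
    have hIC : List.IsChain (Pa G R) (v :: c :: l) := hchainL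
    obtain ⟨h0, hstep⟩ : (∀ h : 0 < (c::l).length, Pa G R v ((c::l).get ⟨0, h⟩)) ∧
        ∀ (i : ℕ) (h : i < (c::l).length - 1),
          Pa G R ((c::l).get ⟨i, by omega⟩) ((c::l).get ⟨i+1, by omega⟩) :=
      ⟨fun h => by simpa using List.isChain_iff_getElem.1 hIC 0 (by simp),
        fun i h => by exact List.isChain_iff_getElem.1 hIC (i+1) (by simp at h ⊢; omega)⟩
    have hgetsucc : ∀ (j : ℕ) (hj : j < n), L.getD (j+1) v = (c :: l).get ⟨j, hj⟩ := by
      intro j hj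
      rw [List.getD_eq_getElem L v (by omega)]
      simp [hL]
    cases k with
    | zero =>
      rw [hget0, hgetsucc 0 hn0]
      exact h0 hn0
    | succ j =>
      rw [hgetsucc j (by omega), hgetsucc (j+1) hk]
      exact hstep j (by omega)
  apply noPcycle hlin hcomp hrule n hn0
  refine ⟨fun i => L.getD (i % n) v, fun i => ?_, fun i => ?_⟩
  · show L.getD ((i + n) % n) v = L.getD (i % n) v
    rw [Nat.add_mod_right]
  · show Pa G R (L.getD (i % n) v) (L.getD ((i + 1) % n) v)
    have hr : i % n < n := Nat.mod_lt _ hn0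
    have hmod : (i + 1) % n = (i % n + 1) % n := (Nat.mod_add_mod i n 1).symm
    rcases Nat.lt_or_ge (i % n + 1) n with hlt | hge
    · rw [hmod, Nat.mod_eq_of_lt hlt]
      exact harc' _ hr
    · have heq : i % n + 1 = n := by omega
      rw [hmod, heq, Nat.mod_self, hget0]
      have := harc' (i % n) hr
      rwa [heq, hgetn] at this

end Acyc

section Build

variable {V : Type*} [Fintype V] {G : SimpleGraph V} {R : V → V → Prop}

open Finset Relation

theorem backward (hlin : IsLinearOrd R) (hcomp : IsCompOrdering Gᶜ R)
    (hrule : TwoK2Rule Gᶜ R) :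
    ∃ p s t : V → ℝ, (∀ v, s v ≤ t v) ∧
      ∀ u v : V, G.Adj u v ↔ u ≠ v ∧
        (STriangle (p u) (s u) (t u) ∩ STriangle (p v) (s v) (t v)).Nonempty := by
  classical
  -- heights
  set N : V → ℕ := fun v => (univ.filter (fun w => TransGen (Pa G R) w v)).card with hN
  have hNlt : ∀ v' v, Pa G R v' v → N v' < N v := by
    intro v' v h
    apply Finset.card_lt_card
    constructor
    · intro w hw
      simp only [mem_filter, mem_univ, true_and] at hw ⊢
      exact hw.tail h
    · intro hsub
      have hv' : v' ∈ univ.filter (fun w => TransGen (Pa G R) w v) := by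
        simp only [mem_filter, mem_univ, true_and]
        exact TransGen.single h
      have := hsub hv'
      simp only [mem_filter, mem_univ, true_and] at this
      exact acyclic hlin hcomp hrule v' this
  set M : V → ℕ := fun u =>
    (univ.filter (fun w => w = u ∨ (G.Adj u w ∧ R u w))).sup N with hM
  have hNM : ∀ v, N v ≤ M v := by
    intro v
    apply Finset.le_sup
    simp
  have hB : ∀ u v, G.Adj u v → R u v → N v ≤ M u := by
    intro u v hadj hr
    apply Finset.le_sup
    simp only [mem_filter, mem_univ, true_and]
    exact Or.inr ⟨hadj, hr⟩
  have hA : ∀ u v, Ori G R u v → M u < N v := by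
    intro u v ho
    have hNv : 0 < N v := by
      have := hNlt u v ⟨u, ho, Or.inl rfl⟩
      omega
    rw [hM]
    rw [Finset.sup_lt_iff (show ⊥ < N v by simp only [Nat.bot_eq_zero]; exact hNv)]
    intro w hw
    simp only [mem_filter, mem_univ, true_and] at hw
    exact hNlt w v ⟨u, ho, hw⟩
  -- apexes
  set ρ : V → ℕ := fun v => (univ.filter (fun w => R w v)).card with hρ
  have hρlt : ∀ u v, R u v → ρ u < ρ v := by
    intro u v h
    apply Finset.card_lt_card
    constructor
    · intro w hw
      simp only [mem_filter, mem_univ, true_and] at hw ⊢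
      exact hlin.2.1 hw h
    · intro hsub
      have hu : u ∈ univ.filter (fun w => R w v) := by
        simp only [mem_filter, mem_univ, true_and]; exact h
      have := hsub hu
      simp only [mem_filter, mem_univ, true_and] at this
      exact hlin.1 u this
  refine ⟨fun v => (ρ v : ℝ), fun v => (N v : ℝ), fun v => (M v : ℝ),
    fun v => by show (N v : ℝ) ≤ (M v : ℝ); exact_mod_cast hNM v, fun u v => ?_⟩
  constructor
  · intro hadj
    refine ⟨hadj.ne, ?_⟩
    rw [inter_nonempty_iff (show ((N u : ℝ)) ≤ (M u : ℝ) by exact_mod_cast hNM u)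
      (show ((N v : ℝ)) ≤ (M v : ℝ) by exact_mod_cast hNM v)]
    rintro (⟨h1, h2⟩ | ⟨h1, h2⟩)
    · have hruv : R u v := by
        rcases hlin.2.2 u v hadj.ne with hr | hr
        · exact hr
        · exact absurd (by exact_mod_cast hρlt v u hr : (ρ v:ℝ) < ρ u) (by linarith)
      have := hB u v hadj hruv
      have h2' : M u < N v := by exact_mod_cast (show ((M u : ℝ)) < (N v : ℝ) from h2)
      omega
    · have hrvu : R v u := by
        rcases hlin.2.2 v u hadj.ne.symm with hr | hr
        · exact hr
        · exact absurd (by exact_mod_cast hρlt u v hr : (ρ u:ℝ) < ρ v) (by linarith)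
      have := hB v u hadj.symm hrvu
      have h2' : M v < N u := by exact_mod_cast (show ((M v : ℝ)) < (N u : ℝ) from h2)
      omega
  · rintro ⟨hne, hmeet⟩
    by_contra hnadj
    have hcadj : Gᶜ.Adj u v := by
      rw [SimpleGraph.compl_adj]; exact ⟨hne, hnadj⟩
    rw [inter_nonempty_iff (show ((N u : ℝ)) ≤ (M u : ℝ) by exact_mod_cast hNM u)
      (show ((N v : ℝ)) ≤ (M v : ℝ) by exact_mod_cast hNM v)] at hmeet
    apply hmeet
    rcases cadj_total hlin hcadj with ho | ho
    · exact Or.inl ⟨by show ((ρ u:ℝ)) < (ρ v:ℝ); exact_mod_cast hρlt u v ho.2,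
        by show ((M u:ℝ)) < (N v:ℝ); exact_mod_cast hA u v ho⟩
    · exact Or.inr ⟨by show ((ρ v:ℝ)) < (ρ u:ℝ); exact_mod_cast hρlt v u ho.2,
        by show ((M v:ℝ)) < (N u:ℝ); exact_mod_cast hA v u ho⟩

end Build

end ST

theorem stmt10 {V : Type*} [Fintype V] (G : SimpleGraph V) :
    IsSimpleTriangleGraph G ↔
      ∃ R : V → V → Prop, IsLinearOrd R ∧ IsCompOrdering Gᶜ R ∧
        TwoK2Rule Gᶜ R := by
  constructor
  · rintro ⟨p, s, t, hst, hadj⟩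
    exact ST.forward G p s t hst hadj
  · rintro ⟨R, hlin, hcomp, hrule⟩
    obtain ⟨p, s, t, h1, h2⟩ := ST.backward hlin hcomp hrule
    exact ⟨p, s, t, h1, h2⟩
end

section
/- A graph G is a simple-triangle graph if and only if G has a cocomparability ordering fulfilling the C4 rule. -/
variable {V : Type*}

namespace STaux

lemma mem_props {p s t : ℝ} (hst : s ≤ t) {q : ℝ × ℝ} (hq : q ∈ STriangle p s t) :
    0 ≤ q.2 ∧ q.2 ≤ 1 ∧ s*(1-q.2) + p*q.2 ≤ q.1 ∧ q.1 ≤ t*(1-q.2) + p*q.2 := by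
  have hsub : STriangle p s t ⊆
      {q : ℝ × ℝ | 0 ≤ q.2 ∧ q.2 ≤ 1 ∧ s*(1-q.2) + p*q.2 ≤ q.1 ∧ q.1 ≤ t*(1-q.2) + p*q.2} := by
    apply convexHull_min
    · rintro x (rfl | rfl | rfl) <;> constructor <;> norm_num <;> linarith
    · rintro x ⟨hx0, hx1, hx2, hx3⟩ y ⟨hy0, hy1, hy2, hy3⟩ a b ha hb hab
      have hb' : b = 1 - a := by linarith
      subst hb'
      have h2 : (a • x + (1-a) • y).2 = a * x.2 + (1-a) * y.2 := rfl
      have h1 : (a • x + (1-a) • y).1 = a * x.1 + (1-a) * y.1 := rfl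
      refine ⟨?_, ?_, ?_, ?_⟩ <;> simp only [h1, h2] <;>
        nlinarith [mul_le_mul_of_nonneg_left hx2 ha, mul_le_mul_of_nonneg_left hy2 hb,
          mul_le_mul_of_nonneg_left hx3 ha, mul_le_mul_of_nonneg_left hy3 hb,
          mul_le_mul_of_nonneg_left hx0 ha, mul_le_mul_of_nonneg_left hy0 hb,
          mul_le_mul_of_nonneg_left hx1 ha, mul_le_mul_of_nonneg_left hy1 hb]
  exact hsub hq

lemma disjoint_of {p s t p' s' t' : ℝ} (hst : s ≤ t) (hst' : s' ≤ t')
    (hp : p < p') (ht : t < s') :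
    STriangle p s t ∩ STriangle p' s' t' = ∅ := by
  ext q
  simp only [Set.mem_inter_iff, Set.mem_empty_iff_false, iff_false, not_and]
  intro hq hq'
  obtain ⟨hy0, hy1, _, h3⟩ := mem_props hst hq
  obtain ⟨_, _, h2', _⟩ := mem_props hst' hq'
  have key : t*(1-q.2) + p*q.2 < s'*(1-q.2) + p'*q.2 := by
    rcases lt_or_ge q.2 1 with h | h
    · nlinarith [mul_pos (sub_pos.2 ht) (sub_pos.2 h), mul_nonneg (sub_pos.2 hp).le hy0]
    · have : q.2 = 1 := le_antisymm hy1 h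
      rw [this]; nlinarith
  linarith

lemma apex_mem (p s t : ℝ) : ((p, 1) : ℝ × ℝ) ∈ STriangle p s t :=
  subset_convexHull ℝ _ (by simp)

lemma base_mem (p : ℝ) {s t x : ℝ} (h1 : s ≤ x) (h2 : x ≤ t) :
    ((x, 0) : ℝ × ℝ) ∈ STriangle p s t := by
  apply segment_subset_convexHull (show ((s,0):ℝ×ℝ) ∈ _ by simp) (show ((t,0):ℝ×ℝ) ∈ _ by simp)
  rcases eq_or_lt_of_le (le_trans h1 h2 : s ≤ t) with h | h
  · have : x = s := le_antisymm (h ▸ h2) h1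
    subst this; exact left_mem_segment ℝ _ _
  · refine ⟨1 - (x-s)/(t-s), (x-s)/(t-s), ?_, ?_, by ring, ?_⟩
    · have : (x-s)/(t-s) ≤ 1 := by
        rw [div_le_one (by linarith)]; linarith
      linarith
    · exact div_nonneg (by linarith) (by linarith)
    · have hne : t - s ≠ 0 := by linarith
      show (_ • ((s:ℝ),(0:ℝ)) + _ • ((t:ℝ),(0:ℝ))) = _
      ext
      · show (1 - (x-s)/(t-s)) * s + (x-s)/(t-s) * t = x
        field_simp
        ring
      · show (1 - (x-s)/(t-s)) * 0 + (x-s)/(t-s) * 0 = 0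
        ring

lemma left_side_mem (p : ℝ) {s t y : ℝ} (hst : s ≤ t) (h0 : 0 ≤ y) (h1 : y ≤ 1) :
    ((s*(1-y) + p*y, y) : ℝ × ℝ) ∈ STriangle p s t := by
  apply segment_subset_convexHull (show ((s,0):ℝ×ℝ) ∈ _ by simp) (show ((p,1):ℝ×ℝ) ∈ _ by simp)
  refine ⟨1 - y, y, by linarith, h0, by ring, ?_⟩
  show (_ • ((s:ℝ),(0:ℝ)) + _ • ((p:ℝ),(1:ℝ))) = _
  ext
  · show (1-y) * s + y * p = s*(1-y) + p*y; ring
  · show (1-y) * 0 + y * 1 = y; ring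

lemma right_side_mem (p : ℝ) {s t y : ℝ} (hst : s ≤ t) (h0 : 0 ≤ y) (h1 : y ≤ 1) :
    ((t*(1-y) + p*y, y) : ℝ × ℝ) ∈ STriangle p s t := by
  apply segment_subset_convexHull (show ((t,0):ℝ×ℝ) ∈ _ by simp) (show ((p,1):ℝ×ℝ) ∈ _ by simp)
  refine ⟨1 - y, y, by linarith, h0, by ring, ?_⟩
  show (_ • ((t:ℝ),(0:ℝ)) + _ • ((p:ℝ),(1:ℝ))) = _
  ext
  · show (1-y) * t + y * p = t*(1-y) + p*y; ring
  · show (1-y) * 0 + y * 1 = y; ring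

lemma nonempty_of_lt {p s t p' s' t' : ℝ} (hst : s ≤ t) (hst' : s' ≤ t')
    (hp : p < p') (h : s' ≤ t) :
    (STriangle p s t ∩ STriangle p' s' t').Nonempty := by
  rcases le_or_gt s t' with hc | hc
  · refine ⟨(max s s', 0), base_mem p (le_max_left _ _) (max_le hst h), 
      base_mem p' (le_max_right _ _) (max_le hc hst')⟩
  · -- t' < s : crossing sides
    set d : ℝ := (s - t') + (p' - p) with hd
    have hd0 : 0 < d := by simp only [hd]; linarith
    set y : ℝ := (s - t') / d with hy
    have hy0 : 0 ≤ y := div_nonneg (by linarith) hd0.le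
    have hy1 : y ≤ 1 := by
      rw [hy, div_le_one hd0]; linarith
    have heq : s*(1-y) + p*y = t'*(1-y) + p'*y := by
      have hdne : d ≠ 0 := hd0.ne'
      field_simp [hy]
      have hyd : y * d = s - t' := by rw [hy]; field_simp
      linear_combination -hyd + y*hd
    refine ⟨(s*(1-y) + p*y, y), left_side_mem p hst hy0 hy1, ?_⟩
    rw [heq]
    exact right_side_mem p' hst' hy0 hy1

lemma inter_nonempty_iff {p s t p' s' t' : ℝ} (hst : s ≤ t) (hst' : s' ≤ t') :
    (STriangle p s t ∩ STriangle p' s' t').Nonempty ↔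
      ¬((p < p' ∧ t < s') ∨ (p' < p ∧ t' < s)) := by
  constructor
  · rintro ⟨q, hq, hq'⟩ (⟨h1, h2⟩ | ⟨h1, h2⟩)
    · have := disjoint_of hst hst' h1 h2
      have : q ∈ (∅ : Set (ℝ × ℝ)) := this ▸ Set.mem_inter hq hq'
      exact this
    · have := disjoint_of hst' hst h1 h2
      have : q ∈ (∅ : Set (ℝ × ℝ)) := this ▸ Set.mem_inter hq' hq
      exact this
  · intro h
    push_neg at h
    obtain ⟨h1, h2⟩ := h
    rcases lt_trichotomy p p' with hp | hp | hp
    · exact nonempty_of_lt hst hst' hp (not_lt.mp (fun hh => absurd (h1 hp) (not_le.mpr hh)) : s' ≤ t)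
    · exact ⟨(p, 1), apex_mem p s t, hp ▸ apex_mem p' s' t'⟩
    · have h2' : s ≤ t' := not_lt.mp (fun hh => absurd (h2 hp) (not_le.mpr hh))
      obtain ⟨q, hq1, hq2⟩ := nonempty_of_lt hst' hst hp h2'
      exact ⟨q, hq2, hq1⟩

end STaux


section KeyLemma

variable {V : Type*}

/-- The central case analysis for the C4 rule in the forward direction. -/
lemma key_c4 (p s t : V → ℝ) (R : V → V → Prop)
    (hR1 : ∀ a b, p a < p b → R a b)
    (hR2 : ∀ a b, R a b → p a ≤ p b)
    (hR3 : ∀ a b, p a = p b → s b < s a → R a b)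
    (hR4 : ∀ a b, R a b → p a = p b → s b ≤ s a)
    (u v w x : V)
    (hpuw : p u < p w) (htsw : t u < s w)
    (hpvx : p v < p x) (htsx : t v < s x)
    (euv : ¬(p u < p v ∧ t u < s v) ∧ ¬(p v < p u ∧ t v < s u))
    (evw : ¬(p v < p w ∧ t v < s w) ∧ ¬(p w < p v ∧ t w < s v))
    (ewx : ¬(p w < p x ∧ t w < s x) ∧ ¬(p x < p w ∧ t x < s w))
    (exu : ¬(p x < p u ∧ t x < s u) ∧ ¬(p u < p x ∧ t u < s x)) :
    (R u v ↔ R w v) ∧ (R w v ↔ R w x) ∧ (R w x ↔ R u x) := by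
  rcases lt_trichotomy (p v) (p u) with hvu | hvu | hvu
  · -- p v < p u
    have h1 : s u ≤ t v := not_lt.mp (fun h => euv.2 ⟨hvu, h⟩)
    rcases lt_trichotomy (p x) (p u) with hxu | hxu | hxu
    · -- all four false
      have g1 : ¬ R u v := fun h => absurd (hR2 _ _ h) (not_le.mpr hvu)
      have g2 : ¬ R w v := fun h => absurd (hR2 _ _ h) (not_le.mpr (hvu.trans hpuw))
      have g3 : ¬ R w x := fun h => absurd (hR2 _ _ h) (not_le.mpr (hxu.trans hpuw))
      have g4 : ¬ R u x := fun h => absurd (hR2 _ _ h) (not_le.mpr hxu)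
      exact ⟨iff_of_false g1 g2, iff_of_false g2 g3, iff_of_false g3 g4⟩
    · -- p x = p u : tie broken by s
      have hsux : s u < s x := lt_of_le_of_lt h1 htsx
      have g4 : ¬ R u x := fun h => absurd (hR4 _ _ h hxu.symm) (not_le.mpr hsux)
      have g1 : ¬ R u v := fun h => absurd (hR2 _ _ h) (not_le.mpr hvu)
      have g2 : ¬ R w v := fun h => absurd (hR2 _ _ h) (not_le.mpr (hvu.trans hpuw))
      have g3 : ¬ R w x := fun h => by
        have := hR2 _ _ h; rw [hxu] at this; exact absurd this (not_le.mpr hpuw)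
      exact ⟨iff_of_false g1 g2, iff_of_false g2 g3, iff_of_false g3 g4⟩
    · -- p u < p x : impossible
      have h2 : s x ≤ t u := not_lt.mp (fun h => exu.2 ⟨hxu, h⟩)
      have h3 : s w ≤ t v := not_lt.mp (fun h => evw.1 ⟨hvu.trans hpuw, h⟩)
      exfalso; linarith
  · -- p v = p u : impossible
    have hvw : p v < p w := by rw [hvu]; exact hpuw
    have h3 : s w ≤ t v := not_lt.mp (fun h => evw.1 ⟨hvw, h⟩)
    have hux : p u < p x := by rw [← hvu]; exact hpvx
    have h2 : s x ≤ t u := not_lt.mp (fun h => exu.2 ⟨hux, h⟩)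
    exfalso; linarith
  · -- p u < p v
    rcases lt_trichotomy (p v) (p w) with hvw | hvw | hvw
    · -- impossible
      have a1 : s v ≤ t u := not_lt.mp (fun h => euv.1 ⟨hvu, h⟩)
      have a2 : s w ≤ t v := not_lt.mp (fun h => evw.1 ⟨hvw, h⟩)
      have a3 : s x ≤ t u := not_lt.mp (fun h => exu.2 ⟨hvu.trans hpvx, h⟩)
      exfalso; linarith
    · -- p v = p w : tie broken by s, all true
      have a1 : s v ≤ t u := not_lt.mp (fun h => euv.1 ⟨hvu, h⟩)
      have hsvw : s v < s w := lt_of_le_of_lt a1 htsw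
      have g1 : R u v := hR1 _ _ hvu
      have g2 : R w v := hR3 _ _ hvw.symm hsvw
      have g3 : R w x := hR1 _ _ (by rw [← hvw]; exact hpvx)
      have g4 : R u x := hR1 _ _ (hvu.trans hpvx)
      exact ⟨iff_of_true g1 g2, iff_of_true g2 g3, iff_of_true g3 g4⟩
    · -- p w < p v : all true
      have g1 : R u v := hR1 _ _ hvu
      have g2 : R w v := hR1 _ _ hvw
      have g3 : R w x := hR1 _ _ (hvw.trans hpvx)
      have g4 : R u x := hR1 _ _ (hvu.trans hpvx)
      exact ⟨iff_of_true g1 g2, iff_of_true g2 g3, iff_of_true g3 g4⟩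

end KeyLemma

section Forward

lemma forward_dir {V : Type*} [Fintype V] (G : SimpleGraph V) (h : IsSimpleTriangleGraph G) :
    ∃ R : V → V → Prop, IsLinearOrd R ∧ IsCocompOrdering G R ∧ C4Rule G R := by
  obtain ⟨p, s, t, hst, hadj⟩ := h
  have hA : ∀ u v, G.Adj u v ↔
      u ≠ v ∧ ¬((p u < p v ∧ t u < s v) ∨ (p v < p u ∧ t v < s u)) := by
    intro u v
    rw [hadj u v, STaux.inter_nonempty_iff (hst u) (hst v)]
  classical
  set i : V → ℕ := fun v => ((Fintype.equivFin V) v : ℕ) with hi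
  have hiinj : Function.Injective i := by
    intro a b hab
    exact (Fintype.equivFin V).injective (Fin.val_injective hab)
  set F : V → ℝ ×ₗ (ℝ ×ₗ (ℝ ×ₗ ℕ)) :=
    fun v => toLex (p v, toLex (-(s v), toLex (-(t v), i v))) with hF
  set R : V → V → Prop := fun u v => F u < F v with hRdef
  have hR1 : ∀ a b, p a < p b → R a b := fun a b hab => Prod.Lex.lt_iff.mpr (Or.inl hab)
  have hR2 : ∀ a b, R a b → p a ≤ p b := by
    intro a b hab
    rcases Prod.Lex.lt_iff.mp hab with h | ⟨h, _⟩
    · exact h.le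
    · exact h.le
  have hR3 : ∀ a b, p a = p b → s b < s a → R a b := by
    intro a b h1 h2
    exact Prod.Lex.lt_iff.mpr (Or.inr ⟨h1, Prod.Lex.lt_iff.mpr (Or.inl (neg_lt_neg h2))⟩)
  have hR4 : ∀ a b, R a b → p a = p b → s b ≤ s a := by
    intro a b hab h1
    rcases Prod.Lex.lt_iff.mp hab with h | ⟨_, h2⟩
    · exact absurd h (by show ¬ p a < p b; rw [h1]; exact lt_irrefl _)
    · rcases Prod.Lex.lt_iff.mp h2 with h3 | ⟨h3, _⟩
      · exact (neg_lt_neg_iff.mp h3).le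
      · exact (neg_injective h3).symm.le
  have hR5 : ∀ a b, p a = p b → s a = s b → t b < t a → R a b := by
    intro a b h1 h2 h3
    exact Prod.Lex.lt_iff.mpr (Or.inr ⟨h1, Prod.Lex.lt_iff.mpr (Or.inr
      ⟨by show -(s a) = -(s b); rw [h2], Prod.Lex.lt_iff.mpr (Or.inl (neg_lt_neg h3))⟩)⟩)
  have hR6 : ∀ a b, p a = p b → s a = s b → t a = t b → i a < i b → R a b := by
    intro a b h1 h2 h3 h4
    exact Prod.Lex.lt_iff.mpr (Or.inr ⟨h1, Prod.Lex.lt_iff.mpr (Or.inr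
      ⟨by show -(s a) = -(s b); rw [h2], Prod.Lex.lt_iff.mpr (Or.inr ⟨by show -(t a) = -(t b); rw [h3], h4⟩)⟩)⟩)
  have hne_of_R : ∀ a b, R a b → a ≠ b := by
    rintro a b hab rfl; exact lt_irrefl _ hab
  refine ⟨R, ⟨fun a => lt_irrefl _, fun a b c h1 h2 => lt_trans h1 h2, ?_⟩, ?_, ?_⟩
  · -- totality
    intro u v huv
    rcases lt_trichotomy (p u) (p v) with h | h | h
    · exact Or.inl (hR1 _ _ h)
    · rcases lt_trichotomy (s u) (s v) with h' | h' | h'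
      · exact Or.inr (hR3 _ _ h.symm h')
      · rcases lt_trichotomy (t u) (t v) with h'' | h'' | h''
        · exact Or.inr (hR5 _ _ h.symm h'.symm h'')
        · rcases lt_or_gt_of_ne (fun he => huv (hiinj he)) with h3 | h3
          · exact Or.inl (hR6 _ _ h h' h'' h3)
          · exact Or.inr (hR6 _ _ h.symm h'.symm h''.symm h3)
        · exact Or.inl (hR5 _ _ h h' h'')
      · exact Or.inl (hR3 _ _ h h')
    · exact Or.inr (hR1 _ _ h)
  · -- cocomparability ordering
    intro a b c hab hbc hac
    by_contra hcon
    push_neg at hcon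
    obtain ⟨h1, h2⟩ := hcon
    have c1 : (p a < p b ∧ t a < s b) ∨ (p b < p a ∧ t b < s a) := by
      by_contra hc; exact h1 ((hA a b).mpr ⟨hne_of_R _ _ hab, hc⟩)
    have c2 : (p b < p c ∧ t b < s c) ∨ (p c < p b ∧ t c < s b) := by
      by_contra hc; exact h2 ((hA b c).mpr ⟨hne_of_R _ _ hbc, hc⟩)
    have hpab := hR2 _ _ hab
    have hpbc := hR2 _ _ hbc
    have d1 : p a < p b ∧ t a < s b := by
      rcases c1 with h | h
      · exact h
      · exact absurd hpab (not_le.mpr h.1)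
    have d2 : p b < p c ∧ t b < s c := by
      rcases c2 with h | h
      · exact h
      · exact absurd hpbc (not_le.mpr h.1)
    have := (hA a c).mp hac
    exact this.2 (Or.inl ⟨d1.1.trans d2.1, by linarith [hst b, d1.2, d2.2]⟩)
  · -- C4 rule
    intro u0 v0 w0 x0 hc4
    obtain ⟨hnd, e1, e2, e3, e4, n1, n2⟩ := hc4
    have hnuw : u0 ≠ w0 := by
      simp only [List.nodup_cons, List.mem_cons, List.mem_singleton, List.not_mem_nil,
        or_false, List.nodup_nil] at hnd
      tauto
    have hnvx : v0 ≠ x0 := by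
      simp only [List.nodup_cons, List.mem_cons, List.mem_singleton, List.not_mem_nil,
        or_false, List.nodup_nil] at hnd
      tauto
    have edge : ∀ a b, G.Adj a b →
        ¬(p a < p b ∧ t a < s b) ∧ ¬(p b < p a ∧ t b < s a) := by
      intro a b hab
      have := (hA a b).mp hab
      exact ⟨fun hx => this.2 (Or.inl hx), fun hx => this.2 (Or.inr hx)⟩
    have nonedge : ∀ a b, a ≠ b → ¬G.Adj a b →
        (p a < p b ∧ t a < s b) ∨ (p b < p a ∧ t b < s a) := by
      intro a b hab h
      by_contra hc
      exact h ((hA a b).mpr ⟨hab, hc⟩)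
    rcases nonedge _ _ hnuw n1 with ⟨q1, q2⟩ | ⟨q1, q2⟩ <;>
      rcases nonedge _ _ hnvx n2 with ⟨r1, r2⟩ | ⟨r1, r2⟩
    · exact key_c4 p s t R hR1 hR2 hR3 hR4 u0 v0 w0 x0 q1 q2 r1 r2
        (edge _ _ e1) (edge _ _ e2) (edge _ _ e3) (edge _ _ e4)
    · have hk := key_c4 p s t R hR1 hR2 hR3 hR4 u0 x0 w0 v0 q1 q2 r1 r2
        (edge _ _ e4.symm) (edge _ _ e3.symm) (edge _ _ e2.symm) (edge _ _ e1.symm)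
      exact ⟨hk.2.2.symm, hk.2.1.symm, hk.1.symm⟩
    · have hk := key_c4 p s t R hR1 hR2 hR3 hR4 w0 v0 u0 x0 q1 q2 r1 r2
        (edge _ _ e2.symm) (edge _ _ e1.symm) (edge _ _ e4.symm) (edge _ _ e3.symm)
      exact ⟨hk.1.symm, hk.1.trans (hk.2.1.trans hk.2.2), hk.2.2.symm⟩
    · have hk := key_c4 p s t R hR1 hR2 hR3 hR4 w0 x0 u0 v0 q1 q2 r1 r2
        (edge _ _ e3) (edge _ _ e4) (edge _ _ e1) (edge _ _ e2)
      exact ⟨hk.2.2, hk.2.2.symm.trans (hk.2.1.symm.trans hk.1.symm), hk.1⟩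

end Forward

section ReverseCombinatorics

variable {V : Type*}

/-- The auxiliary relation forcing `s a < s b` in the construction. -/
def SStep (G : SimpleGraph V) (R : V → V → Prop) (a b : V) : Prop :=
  ∃ u, R u b ∧ ¬G.Adj u b ∧ (u = a ∨ (R u a ∧ G.Adj u a))

lemma mkC4 {G : SimpleGraph V} {a b c d : V}
    (h1 : G.Adj a b) (h2 : G.Adj b c) (h3 : G.Adj c d) (h4 : G.Adj d a)
    (n1 : ¬G.Adj a c) (n2 : ¬G.Adj b d) (hac : a ≠ c) (hbd : b ≠ d) :
    IsC4 G a b c d := by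
  refine ⟨?_, h1, h2, h3, h4, n1, n2⟩
  have e1 := h1.ne; have e2 := h2.ne; have e3 := h3.ne; have e4 := (h4.ne).symm
  simp [List.nodup_cons, e1, e2, e3, e4, hac, hbd]

variable {G : SimpleGraph V} {R : V → V → Prop}

lemma R_ne (hirr : Irreflexive R) {a b : V} (h : R a b) : a ≠ b :=
  fun he => hirr b (he ▸ h)

lemma R_asymm (hirr : Irreflexive R) (htr : Transitive R) {a b : V} (h : R a b) :
    ¬ R b a := fun h' => hirr a (htr h h')

lemma sstep_irrefl (hirr : Irreflexive R) (a : V) : ¬ SStep G R a a := by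
  rintro ⟨u, hub, hnub, rfl | ⟨hua, hEua⟩⟩
  · exact hirr u hub
  · exact hnub hEua

lemma two_cycle_aux (hirr : Irreflexive R) (htr : Transitive R)
    (htot : ∀ u v : V, u ≠ v → R u v ∨ R v u)
    (hco : IsCocompOrdering G R) (hc4 : C4Rule G R) {a b u w : V}
    (hub : R u b) (hnub : ¬G.Adj u b) (hua : R u a) (hEua : G.Adj u a)
    (hwa : R w a) (hnwa : ¬G.Adj w a) (hwb : R w b) (hEwb : G.Adj w b)
    (hab : R a b) : False := by
  have hEab : G.Adj a b := by
    rcases hco w a b hwa hab hEwb with h | h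
    · exact absurd h hnwa
    · exact h
  have huw : u ≠ w := fun he => hnub (he ▸ hEwb)
  have hEuw : G.Adj u w := by
    rcases htot u w huw with h | h
    · rcases hco u w a h hwa hEua with h' | h'
      · exact h'
      · exact absurd h' hnwa
    · rcases hco w u b h hub hEwb with h' | h'
      · exact h'.symm
      · exact absurd h' hnub
  have hC4 : IsC4 G u w b a :=
    mkC4 hEuw hEwb hEab.symm hEua.symm hnub hnwa (R_ne hirr hub) (R_ne hirr hwa)
  have h3 := (hc4 u w b a hC4).2.2
  exact R_asymm hirr htr hab (h3.mpr hua)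

lemma sstep_two_cycle (hirr : Irreflexive R) (htr : Transitive R)
    (htot : ∀ u v : V, u ≠ v → R u v ∨ R v u)
    (hco : IsCocompOrdering G R) (hc4 : C4Rule G R) {a b : V}
    (h1 : SStep G R a b) (h2 : SStep G R b a) : False := by
  obtain ⟨u, hub, hnub, hu⟩ := h1
  obtain ⟨w, hwa, hnwa, hw⟩ := h2
  rcases hu with rfl | ⟨hua, hEua⟩
  · -- u = a : R a b, ¬Adj a b
    rcases hw with rfl | ⟨hwb, hEwb⟩
    · exact hirr u (htr hub hwa)
    · rcases hco w u b hwa hub hEwb with h | h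
      · exact hnwa h
      · exact hnub h
  · rcases hw with rfl | ⟨hwb, hEwb⟩
    · -- w = b : R b a, ¬Adj b a
      rcases hco u w a hub hwa hEua with h | h
      · exact hnub h
      · exact hnwa h
    · -- both type 1
      have hne : a ≠ b := by
        rintro rfl
        exact hnub hEua
      rcases htot a b hne with h | h
      · exact two_cycle_aux hirr htr htot hco hc4 hub hnub hua hEua hwa hnwa hwb hEwb h
      · exact two_cycle_aux hirr htr htot hco hc4 hwa hnwa hwb hEwb hub hnub hua hEua h

lemma sstep_shortcut (hirr : Irreflexive R) (htr : Transitive R)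
    (htot : ∀ u v : V, u ≠ v → R u v ∨ R v u)
    (hco : IsCocompOrdering G R) (hc4 : C4Rule G R) {a b c : V}
    (h1 : SStep G R a b) (h2 : SStep G R b c) (hRab : R a b) (hRcb : R c b)
    (hac : a ≠ c) : SStep G R a c := by
  obtain ⟨u, hub, hnub, hu⟩ := h1
  obtain ⟨w, hwc, hnwc, hw⟩ := h2
  rcases hw with rfl | ⟨hwb, hEwb⟩
  · exact absurd hwc (R_asymm hirr htr hRcb)
  by_contra hnstep
  have fail_u : ¬(R u c ∧ ¬G.Adj u c) := fun hx => hnstep ⟨u, hx.1, hx.2, hu⟩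
  have fail_w : ¬(w = a ∨ (R w a ∧ G.Adj w a)) := fun hx => hnstep ⟨w, hwc, hnwc, hx⟩
  have fail_a : ¬(R a c ∧ ¬G.Adj a c) := fun hx => hnstep ⟨a, hx.1, hx.2, Or.inl rfl⟩
  have hwa_ne : w ≠ a := fun he => fail_w (Or.inl he)
  have fail_w' : ¬(R w a ∧ G.Adj w a) := fun hx => fail_w (Or.inr hx)
  rcases hu with rfl | ⟨hua, hEua⟩
  · -- CASE u = a
    rcases htot u c hac with hRuc | hRcu
    · -- R u c
      have hEac : G.Adj u c := by by_contra h; exact fail_a ⟨hRuc, h⟩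
      rcases htot w u hwa_ne with hRwu | hRuw
      · -- R w u
        have hnwa' : ¬G.Adj w u := fun h => fail_w' ⟨hRwu, h⟩
        rcases hco w u b hRwu hub hEwb with h | h
        · exact hnwa' h
        · exact hnub h
      · -- R u w
        have hEaw : G.Adj u w := by
          rcases hco u w c hRuw hwc hEac with h | h
          · exact h
          · exact absurd h hnwc
        by_cases hEbc : G.Adj b c
        · have hC4 : IsC4 G u w b c :=
            mkC4 hEaw hEwb hEbc hEac.symm hnub hnwc (R_ne hirr hub) (R_ne hirr hwc)
          have h3 := (hc4 u w b c hC4).1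
          exact R_asymm hirr htr hwb (h3.mp hRuw)
        · rcases hco w c b hwc hRcb hEwb with h | h
          · exact hnwc h
          · exact hEbc h.symm
    · -- R c u
      have hRwu : R w u := htr hwc hRcu
      have hnwa' : ¬G.Adj w u := fun h => fail_w' ⟨hRwu, h⟩
      rcases hco w u b hRwu hub hEwb with h | h
      · exact hnwa' h
      · exact hnub h
  · -- CASE u type 1
    have hunw : u ≠ w := fun he => hnub (he ▸ hEwb)
    rcases htot a c hac with hRac | hRca
    · -- (β) R a c
      have hEac : G.Adj a c := by by_contra h; exact fail_a ⟨hRac, h⟩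
      have hRuc : R u c := htr hua hRac
      have hEuc : G.Adj u c := by by_contra h; exact fail_u ⟨hRuc, h⟩
      rcases htot w a hwa_ne with hRwa | hRaw
      · -- R w a
        have hnEwa : ¬G.Adj w a := fun h => fail_w' ⟨hRwa, h⟩
        have hEab : G.Adj a b := by
          rcases hco w a b hRwa hRab hEwb with h | h
          · exact absurd h hnEwa
          · exact h
        by_cases hEuw : G.Adj u w
        · have hC4 : IsC4 G u w b a :=
            mkC4 hEuw hEwb hEab.symm hEua.symm hnub hnEwa (R_ne hirr hub) (R_ne hirr hRwa)
          have h3 := (hc4 u w b a hC4).2.2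
          exact R_asymm hirr htr hRab (h3.mpr hua)
        · rcases htot u w hunw with h | h
          · rcases hco u w c h hwc hEuc with h' | h'
            · exact hEuw h'
            · exact hnwc h'
          · rcases hco w u b h hub hEwb with h' | h'
            · exact hEuw h'.symm
            · exact hnub h'
      · -- R a w
        have hEaw : G.Adj a w := by
          rcases hco a w c hRaw hwc hEac with h | h
          · exact h
          · exact absurd h hnwc
        have hRuw : R u w := htr hua hRaw
        have hEuw : G.Adj u w := by
          rcases hco u w c hRuw hwc hEuc with h | h
          · exact h
          · exact absurd h hnwc
        by_cases hEbc : G.Adj b c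
        · have hC4 : IsC4 G u w b c :=
            mkC4 hEuw hEwb hEbc hEuc.symm hnub hnwc (R_ne hirr hub) (R_ne hirr hwc)
          have h3 := (hc4 u w b c hC4).1
          exact R_asymm hirr htr hwb (h3.mp hRuw)
        · rcases hco w c b hwc hRcb hEwb with h | h
          · exact hnwc h
          · exact hEbc h.symm
    · -- (α) R c a
      have hRwa : R w a := htr hwc hRca
      have hnEwa : ¬G.Adj w a := fun h => fail_w' ⟨hRwa, h⟩
      have hEab : G.Adj a b := by
        rcases hco w a b hRwa hRab hEwb with h | h
        · exact absurd h hnEwa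
        · exact h
      have hEcb : G.Adj c b := by
        rcases hco w c b hwc hRcb hEwb with h | h
        · exact absurd h hnwc
        · exact h
      have hunc : u ≠ c := by
        rintro rfl; exact hnub hEcb
      rcases htot u c hunc with hRuc | hRcu
      · -- R u c
        have hEuc : G.Adj u c := by by_contra h; exact fail_u ⟨hRuc, h⟩
        have hEac : G.Adj a c := by
          by_contra hnac
          have hC4 : IsC4 G u a b c :=
            mkC4 hEua hEab hEcb.symm hEuc.symm hnub hnac (R_ne hirr hub) hac
          have h3 := (hc4 u a b c hC4).1
          exact R_asymm hirr htr hRab (h3.mp hua)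
        have hEuw : G.Adj u w := by
          rcases htot u w hunw with h | h
          · rcases hco u w c h hwc hEuc with h' | h'
            · exact h'
            · exact absurd h' hnwc
          · rcases hco w u b h hub hEwb with h' | h'
            · exact h'.symm
            · exact absurd h' hnub
        have hC4 : IsC4 G w b a u :=
          mkC4 hEwb hEab.symm hEua.symm hEuw hnEwa (fun h => hnub h.symm)
            (R_ne hirr hRwa) (Ne.symm (R_ne hirr hub))
        have h3 := (hc4 w b a u hC4).2.1
        exact R_asymm hirr htr hua (h3.mp hRab)
      · -- R c u
        have hEcu : G.Adj c u := by
          rcases hco c u b hRcu hub hEcb with h | h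
          · exact h
          · exact absurd h hnub
        have hEwu : G.Adj w u := by
          rcases htot u w hunw with h | h
          · exact absurd (htr (htr h hwc) hRcu) (fun hh => hirr u hh)
          · rcases hco w u b h hub hEwb with h' | h'
            · exact h'
            · exact absurd h' hnub
        have hC4 : IsC4 G w u a b :=
          mkC4 hEwu hEua hEab hEwb.symm hnEwa hnub (R_ne hirr hRwa) (R_ne hirr hub)
        have h3 := (hc4 w u a b hC4).1
        exact R_asymm hirr htr hua (h3.mp (htr hwc hRcu))

lemma exists_R_max (htr : Transitive R) (htot : ∀ u v : V, u ≠ v → R u v ∨ R v u) :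
    ∀ (l : List V), l ≠ [] → ∃ v ∈ l, ∀ b ∈ l, b ≠ v → R b v := by
  intro l
  induction l with
  | nil => intro h; exact absurd rfl h
  | cons x xs ih =>
    intro _
    rcases eq_or_ne xs [] with rfl | hxs
    · refine ⟨x, by simp, ?_⟩
      intro b hb hbne
      simp at hb
      exact absurd hb hbne
    · obtain ⟨v, hv, hmax⟩ := ih hxs
      by_cases hxv : x = v
      · refine ⟨v, by simp [hv], ?_⟩
        intro b hb hbne
        rcases List.mem_cons.mp hb with rfl | hb'
        · exact absurd hxv hbne
        · exact hmax b hb' hbne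
      · rcases htot x v hxv with h | h
        · refine ⟨v, by simp [hv], ?_⟩
          intro b hb hbne
          rcases List.mem_cons.mp hb with rfl | hb'
          · exact h
          · exact hmax b hb' hbne
        · refine ⟨x, by simp, ?_⟩
          intro b hb hbne
          rcases List.mem_cons.mp hb with rfl | hb'
          · exact absurd rfl hbne
          · by_cases hbv : b = v
            · exact hbv ▸ h
            · exact htr (hmax b hb' hbv) h

lemma mem_split_first {a : V} : ∀ {l : List V}, a ∈ l → ∃ s t, l = s ++ a :: t ∧ a ∉ s := by
  intro l
  induction l with
  | nil => intro h; cases h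
  | cons x xs ih =>
    intro h
    by_cases hx : a = x
    · exact ⟨[], xs, by simp [hx], by simp⟩
    · have h' : a ∈ xs := by
        rcases List.mem_cons.mp h with h'' | h''
        · exact absurd h'' hx
        · exact h''
      obtain ⟨s, t, he, hn⟩ := ih h'
      exact ⟨x :: s, t, by simp [he], by simp [hx, hn]⟩

lemma no_cycle (hirr : Irreflexive R) (htr : Transitive R)
    (htot : ∀ u v : V, u ≠ v → R u v ∨ R v u)
    (hco : IsCocompOrdering G R) (hc4 : C4Rule G R) :
    ∀ n : ℕ, ∀ a : V, ∀ L : List V, L.length = n →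
      List.IsChain (SStep G R) (a :: L ++ [a]) → False := by
  intro n
  induction n using Nat.strong_induction_on with
  | _ n ih =>
  intro a L hlen hch
  match L, hlen with
  | [], hlen =>
    have : List.IsChain (SStep G R) [a, a] := by simpa using hch
    exact sstep_irrefl hirr a (List.isChain_pair.mp this)
  | x :: xs, hlen =>
  by_cases haL : a ∈ (x :: xs)
  · obtain ⟨A, B, hsplit, -⟩ := mem_split_first haL
    rw [hsplit] at hch
    have hre : a :: (A ++ a :: B) ++ [a] = (a :: A) ++ (a :: (B ++ [a])) := by simp
    rw [hre, List.isChain_append] at hch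
    obtain ⟨hc1, hc2, hj⟩ := hch
    have hlenA : A.length < n := by
      have hthis := congrArg List.length hsplit
      simp only [List.length_cons, List.length_append] at hthis hlen
      omega
    apply ih A.length hlenA a A rfl
    have hre2 : a :: A ++ [a] = (a :: A) ++ [a] := by simp
    rw [hre2, List.isChain_append]
    refine ⟨hc1, List.isChain_singleton a, ?_⟩
    intro p hp q hq
    simp only [List.head?_cons, Option.mem_def, Option.some.injEq] at hq
    subst hq
    exact hj p hp a rfl
  · obtain ⟨v, hvmem, hvmax⟩ := exists_R_max htr htot (a :: x :: xs) (by simp)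
    by_cases hva : v = a
    · subst hva
      have hch' : List.IsChain (SStep G R) (v :: (x :: (xs ++ [v]))) := by simpa using hch
      rw [List.isChain_cons] at hch'
      obtain ⟨hstep1', hch2⟩ := hch'
      have hsteps : SStep G R v x := hstep1' x rfl
      match xs, hlen with
      | [], _ =>
        have hxv : SStep G R x v := by
          have : List.IsChain (SStep G R) [x, v] := by simpa using hch2
          exact List.isChain_pair.mp this
        exact sstep_two_cycle hirr htr htot hco hc4 hsteps hxv
      | y :: ys, hlen =>
        have hMne : (y :: ys : List V) ≠ [] := by simp
        set pred := (y :: ys).getLast hMne with hpred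
        have hch2' : List.IsChain (SStep G R) ((x :: y :: ys) ++ [v]) := by simpa using hch2
        rw [List.isChain_append] at hch2'
        obtain ⟨hc1, -, hj⟩ := hch2'
        have hlast : (x :: y :: ys).getLast? = some pred := by
          rw [List.getLast?_cons_cons, List.getLast?_eq_getLast hMne]
        have hstep2 : SStep G R pred v := hj pred hlast v rfl
        have hxne : x ≠ v := fun he => sstep_irrefl hirr v (he ▸ hsteps)
        have hpredne : pred ≠ v := fun he => sstep_irrefl hirr v (he ▸ hstep2)
        have hRxv : R x v := hvmax x (by simp) hxne
        have hpredmem : pred ∈ v :: x :: y :: ys := by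
          have : pred ∈ y :: ys := hpred ▸ List.getLast_mem hMne
          simp [this]
        have hRpredv : R pred v := hvmax pred hpredmem hpredne
        by_cases hps : pred = x
        · exact sstep_two_cycle hirr htr htot hco hc4 hsteps (hps ▸ hstep2)
        · have hshort : SStep G R pred x :=
            sstep_shortcut hirr htr htot hco hc4 hstep2 hsteps hRpredv hRxv hps
          have hlen' : (y :: ys : List V).length < n := by simp at hlen ⊢; omega
          apply ih (y :: ys).length hlen' x (y :: ys) rfl
          have hre2 : x :: (y :: ys) ++ [x] = (x :: y :: ys) ++ [x] := by simp
          rw [hre2, List.isChain_append]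
          refine ⟨hc1, List.isChain_singleton x, ?_⟩
          intro p hp q hq
          simp only [List.head?_cons, Option.mem_def, Option.some.injEq] at hq
          subst hq
          rw [hlast] at hp
          simp only [Option.mem_def, Option.some.injEq] at hp
          subst hp
          exact hshort
    · have hvL : v ∈ x :: xs := by
        rcases List.mem_cons.mp hvmem with h | h
        · exact absurd h hva
        · exact h
      obtain ⟨A, B, hsplit, hnA⟩ := mem_split_first hvL
      rw [hsplit] at hch
      have hre : a :: (A ++ v :: B) ++ [a] = (a :: A) ++ (v :: (B ++ [a])) := by simp
      rw [hre, List.isChain_append] at hch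
      obtain ⟨hc1, hc2, hj⟩ := hch
      set pred := (a :: A).getLast (List.cons_ne_nil a A) with hpred
      have hlastA : (a :: A).getLast? = some pred :=
        List.getLast?_eq_getLast (List.cons_ne_nil a A)
      have hstep1 : SStep G R pred v := hj pred hlastA v rfl
      rw [List.isChain_cons] at hc2
      obtain ⟨hhd, hc3⟩ := hc2
      have hBa_ne : B ++ [a] ≠ [] := by simp
      set succ := (B ++ [a]).head hBa_ne with hsucc
      have hhead : (B ++ [a]).head? = some succ := List.head?_eq_head hBa_ne
      have hstep2 : SStep G R v succ := hhd succ hhead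
      have hpredmem : pred ∈ a :: x :: xs := by
        have hm : pred ∈ a :: A := hpred ▸ List.getLast_mem (List.cons_ne_nil a A)
        rcases List.mem_cons.mp hm with h | h
        · exact h ▸ (List.mem_cons_self : a ∈ a :: x :: xs)
        · apply List.mem_cons_of_mem
          rw [hsplit]
          exact List.mem_append_left _ h
      have hsuccmem : succ ∈ a :: x :: xs := by
        have hm : succ ∈ B ++ [a] := hsucc ▸ List.head_mem hBa_ne
        rcases List.mem_append.mp hm with h | h
        · apply List.mem_cons_of_mem
          rw [hsplit]
          exact List.mem_append_right _ (List.mem_cons_of_mem _ h)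
        · simp at h
          exact h ▸ (List.mem_cons_self : a ∈ a :: x :: xs)
      have hpredne : pred ≠ v := fun he => sstep_irrefl hirr v (he ▸ hstep1)
      have hsuccne : succ ≠ v := fun he => sstep_irrefl hirr v (he ▸ hstep2)
      have hRpv : R pred v := hvmax pred hpredmem hpredne
      have hRsv : R succ v := hvmax succ hsuccmem hsuccne
      by_cases hps : pred = succ
      · exact sstep_two_cycle hirr htr htot hco hc4 hstep2 (hps ▸ hstep1)
      · have hshort : SStep G R pred succ :=
          sstep_shortcut hirr htr htot hco hc4 hstep1 hstep2 hRpv hRsv hps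
        have hlen' : (A ++ B).length < n := by
          have hthis := congrArg List.length hsplit
          simp only [List.length_cons, List.length_append] at hthis hlen ⊢
          omega
        apply ih (A ++ B).length hlen' a (A ++ B) rfl
        have hre2 : a :: (A ++ B) ++ [a] = (a :: A) ++ (B ++ [a]) := by simp
        rw [hre2, List.isChain_append]
        refine ⟨hc1, hc3, ?_⟩
        intro p hp q hq
        rw [hlastA] at hp
        rw [hhead] at hq
        simp only [Option.mem_def, Option.some.injEq] at hp hq
        subst hp; subst hq
        exact hshort

lemma sstep_acyclic (hirr : Irreflexive R) (htr : Transitive R)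
    (htot : ∀ u v : V, u ≠ v → R u v ∨ R v u)
    (hco : IsCocompOrdering G R) (hc4 : C4Rule G R) (a : V) :
    ¬ Relation.TransGen (SStep G R) a a := by
  intro h
  have hpath : ∀ p q : V, Relation.TransGen (SStep G R) p q →
      ∃ L : List V, List.IsChain (SStep G R) (p :: L ++ [q]) := by
    intro p q hpq
    induction hpq with
    | single h1 => exact ⟨[], List.isChain_pair.mpr h1⟩
    | tail _ h2 ih =>
      obtain ⟨L, hL⟩ := ih
      rename_i b c _
      refine ⟨L ++ [b], ?_⟩
      have hre : p :: (L ++ [b]) ++ [c] = (p :: L ++ [b]) ++ [c] := by simp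
      rw [hre, List.isChain_append]
      refine ⟨hL, List.isChain_singleton c, ?_⟩
      intro s hs q' hq'
      simp only [List.head?_cons, Option.mem_def, Option.some.injEq] at hq'
      subst hq'
      have : (p :: L ++ [b]).getLast? = some b := by
        rw [show p :: L ++ [b] = (p :: L) ++ [b] by simp, List.getLast?_concat]
      rw [this] at hs
      simp only [Option.mem_def, Option.some.injEq] at hs
      subst hs
      exact h2
  obtain ⟨L, hL⟩ := hpath a a h
  exact no_cycle hirr htr htot hco hc4 L.length a L rfl hL

end ReverseCombinatorics

section ReverseMain

lemma reverse_dir {V : Type*} [Fintype V] (G : SimpleGraph V) (R : V → V → Prop)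
    (hlin : IsLinearOrd R) (hco : IsCocompOrdering G R) (hc4 : C4Rule G R) :
    IsSimpleTriangleGraph G := by
  classical
  obtain ⟨hirr, htr, htot⟩ := hlin
  have hacyc := sstep_acyclic hirr htr htot hco hc4
  set S : V → ℕ :=
    fun a => (Finset.univ.filter (fun b => Relation.TransGen (SStep G R) b a)).card with hS
  have hSmono : ∀ a b, SStep G R a b → S a < S b := by
    intro a b hab
    apply Finset.card_lt_card
    have hsub : Finset.univ.filter (fun c => Relation.TransGen (SStep G R) c a) ⊆
        Finset.univ.filter (fun c => Relation.TransGen (SStep G R) c b) := by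
      intro c hc
      rw [Finset.mem_filter] at hc ⊢
      exact ⟨hc.1, hc.2.tail hab⟩
    refine (Finset.ssubset_iff_of_subset hsub).mpr ⟨a, ?_, ?_⟩
    · rw [Finset.mem_filter]
      exact ⟨Finset.mem_univ a, Relation.TransGen.single hab⟩
    · rw [Finset.mem_filter]
      push_neg
      intro _
      exact hacyc a
  set P : V → ℕ := fun a => (Finset.univ.filter (fun b => R b a)).card with hP
  have hPmono : ∀ a b, R a b → P a < P b := by
    intro a b hab
    apply Finset.card_lt_card
    have hsub : Finset.univ.filter (fun c => R c a) ⊆ Finset.univ.filter (fun c => R c b) := by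
      intro c hc
      rw [Finset.mem_filter] at hc ⊢
      exact ⟨hc.1, htr hc.2 hab⟩
    refine (Finset.ssubset_iff_of_subset hsub).mpr ⟨a, ?_, ?_⟩
    · rw [Finset.mem_filter]
      exact ⟨Finset.mem_univ a, hab⟩
    · rw [Finset.mem_filter]
      push_neg
      intro _
      exact hirr a
  have hne' : ∀ a : V,
      ((insert a (Finset.univ.filter (fun b => R a b ∧ G.Adj a b))).image S).Nonempty :=
    fun a => Finset.Nonempty.image ⟨a, Finset.mem_insert_self a _⟩ S
  set T : V → ℕ := fun a =>
    ((insert a (Finset.univ.filter (fun b => R a b ∧ G.Adj a b))).image S).max' (hne' a) with hT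
  have hTa : ∀ a, S a ≤ T a := fun a =>
    Finset.le_max' _ _ (Finset.mem_image_of_mem S (Finset.mem_insert_self a _))
  have hTnb : ∀ a b, R a b → G.Adj a b → S b ≤ T a := by
    intro a b h1 h2
    exact Finset.le_max' _ _ (Finset.mem_image_of_mem S
      (Finset.mem_insert_of_mem (Finset.mem_filter.mpr ⟨Finset.mem_univ b, h1, h2⟩)))
  have hTlt : ∀ a b, R a b → ¬G.Adj a b → T a < S b := by
    intro a b h1 h2
    rw [Finset.max'_lt_iff]
    intro y hy
    obtain ⟨c, hc, rfl⟩ := Finset.mem_image.mp hy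
    rcases Finset.mem_insert.mp hc with rfl | hc'
    · exact hSmono c b ⟨c, h1, h2, Or.inl rfl⟩
    · obtain ⟨-, hRac, hAac⟩ := Finset.mem_filter.mp hc'
      exact hSmono c b ⟨a, h1, h2, Or.inr ⟨hRac, hAac⟩⟩
  refine ⟨fun v => (P v : ℝ), fun v => (S v : ℝ), fun v => (T v : ℝ), ?_, ?_⟩
  · intro v
    exact Nat.cast_le.mpr (hTa v)
  · intro u v
    rw [STaux.inter_nonempty_iff (Nat.cast_le.mpr (hTa u)) (Nat.cast_le.mpr (hTa v))]
    constructor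
    · intro hadj
      refine ⟨hadj.ne, ?_⟩
      rintro (⟨hpc, htc⟩ | ⟨hpc, htc⟩)
      · have hR : R u v := by
          rcases htot u v hadj.ne with h | h
          · exact h
          · exact absurd (Nat.cast_lt.mp hpc) (not_lt.mpr (hPmono v u h).le)
        exact absurd (Nat.cast_lt.mp htc) (not_lt.mpr (hTnb u v hR hadj))
      · have hR : R v u := by
          rcases htot v u hadj.ne' with h | h
          · exact h
          · exact absurd (Nat.cast_lt.mp hpc) (not_lt.mpr (hPmono u v h).le)
        exact absurd (Nat.cast_lt.mp htc) (not_lt.mpr (hTnb v u hR hadj.symm))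
    · rintro ⟨hne, hcond⟩
      by_contra hnadj
      rcases htot u v hne with h | h
      · exact hcond (Or.inl ⟨Nat.cast_lt.mpr (hPmono u v h),
          Nat.cast_lt.mpr (hTlt u v h hnadj)⟩)
      · exact hcond (Or.inr ⟨Nat.cast_lt.mpr (hPmono v u h),
          Nat.cast_lt.mpr (hTlt v u h (fun hh => hnadj hh.symm))⟩)

end ReverseMain

theorem stmt11 {V : Type*} [Fintype V] (G : SimpleGraph V) :
    IsSimpleTriangleGraph G ↔
      ∃ R : V → V → Prop, IsLinearOrd R ∧ IsCocompOrdering G R ∧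
        C4Rule G R := by
  constructor
  · exact forward_dir G
  · rintro ⟨R, hlin, hco, hc4⟩
    exact reverse_dir G R hlin hco hc4
end

section
/- A graph G is a simple-triangle graph if and only if there exist an alternating orientation of G and a transitive orientation of the complement of G such that the union of the two sets of oriented edges is an acyclic orientation of the complete graph on the vertex set. -/
variable {V : Type*}

section Geometry


lemma striangle_subset {p s t : ℝ} (hst : s ≤ t) :
    STriangle p s t ⊆ {q : ℝ × ℝ | 0 ≤ q.2 ∧ q.2 ≤ 1 ∧
      s * (1 - q.2) + p * q.2 ≤ q.1 ∧ q.1 ≤ t * (1 - q.2) + p * q.2} := by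
  apply convexHull_min
  · intro q hq
    simp only [Set.mem_insert_iff, Set.mem_singleton_iff] at hq
    rcases hq with h | h | h <;> subst h <;>
      refine ⟨by norm_num, by norm_num, by norm_num [hst], by norm_num [hst]⟩
  · rintro x hx y hy a b ha hb hab
    simp only [Set.mem_setOf_eq] at hx hy ⊢
    obtain ⟨h1, h2, h3, h4⟩ := hx
    obtain ⟨g1, g2, g3, g4⟩ := hy
    simp only [Prod.fst_add, Prod.snd_add, Prod.smul_fst, Prod.smul_snd, smul_eq_mul]
    have hb' : b = 1 - a := by linarith
    subst hb'
    refine ⟨by nlinarith, by nlinarith, ?_, ?_⟩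
    · have e : s * (1 - (a * x.2 + (1-a) * y.2)) + p * (a * x.2 + (1-a) * y.2)
          = a * (s * (1 - x.2) + p * x.2) + (1-a) * (s * (1 - y.2) + p * y.2) := by ring
      rw [e]
      have := mul_le_mul_of_nonneg_left h3 ha
      have := mul_le_mul_of_nonneg_left g3 hb
      linarith
    · have e : t * (1 - (a * x.2 + (1-a) * y.2)) + p * (a * x.2 + (1-a) * y.2)
          = a * (t * (1 - x.2) + p * x.2) + (1-a) * (t * (1 - y.2) + p * y.2) := by ring
      rw [e]
      have := mul_le_mul_of_nonneg_left h4 ha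
      have := mul_le_mul_of_nonneg_left g4 hb
      linarith

lemma mem_STriangle_base {p s t x0 : ℝ} (h1 : s ≤ x0) (h2 : x0 ≤ t) :
    ((x0, 0) : ℝ × ℝ) ∈ STriangle p s t := by
  have hx : x0 ∈ segment ℝ s t := by
    rw [segment_eq_Icc (le_trans h1 h2)]; exact ⟨h1, h2⟩
  obtain ⟨a, b, ha, hb, hab, hx⟩ := hx
  have he : ((x0, 0) : ℝ × ℝ) = a • ((s, 0) : ℝ × ℝ) + b • ((t, 0) : ℝ × ℝ) := by
    simp only [Prod.ext_iff, Prod.smul_fst, Prod.smul_snd, Prod.fst_add, Prod.snd_add,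
      smul_eq_mul]
    constructor
    · rw [← hx]; simp
    · simp
  rw [he]
  exact segment_subset_convexHull (by simp) (by simp) ⟨a, b, ha, hb, hab, rfl⟩

lemma mem_STriangle_apex {p s t : ℝ} : ((p, 1) : ℝ × ℝ) ∈ STriangle p s t :=
  subset_convexHull ℝ _ (by simp)

lemma mem_STriangle_comb {p s t x0 y : ℝ} (h1 : s ≤ x0) (h2 : x0 ≤ t)
    (hy0 : 0 ≤ y) (hy1 : y ≤ 1) :
    ((1 - y) • ((x0, 0) : ℝ × ℝ) + y • ((p, 1) : ℝ × ℝ)) ∈ STriangle p s t :=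
  (convex_convexHull ℝ _) (mem_STriangle_base h1 h2) mem_STriangle_apex
    (by linarith) hy0 (by ring)

lemma mem_STriangle_comb' {p s t x0 y : ℝ} (h1 : s ≤ x0) (h2 : x0 ≤ t)
    (hy0 : 0 ≤ y) (hy1 : y ≤ 1) :
    ((x0 * (1 - y) + p * y, y) : ℝ × ℝ) ∈ STriangle p s t := by
  have := mem_STriangle_comb (p := p) h1 h2 hy0 hy1
  have he : ((1 - y) • ((x0, 0) : ℝ × ℝ) + y • ((p, 1) : ℝ × ℝ))
      = ((x0 * (1 - y) + p * y, y) : ℝ × ℝ) := by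
    simp only [Prod.ext_iff, Prod.smul_fst, Prod.smul_snd, Prod.fst_add, Prod.snd_add,
      smul_eq_mul]
    constructor <;> ring
  rwa [he] at this

/-- Main geometric lemma. -/
lemma STriangle_inter_nonempty_iff {p s t p' s' t' : ℝ} (h : s ≤ t) (h' : s' ≤ t') :
    (STriangle p s t ∩ STriangle p' s' t').Nonempty ↔
      ¬ ((p < p' ∧ t < s') ∨ (p' < p ∧ t' < s)) := by
  constructor
  · rintro ⟨q, hq, hq'⟩ hsep
    obtain ⟨a1, a2, a3, a4⟩ := striangle_subset h hq
    obtain ⟨b1, b2, b3, b4⟩ := striangle_subset h' hq'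
    rcases hsep with ⟨hp, ht⟩ | ⟨hp, ht⟩
    · nlinarith [mul_le_mul_of_nonneg_right (min_le_left (s' - t) (p' - p))
        (by linarith : (0:ℝ) ≤ 1 - q.2),
        mul_le_mul_of_nonneg_right (min_le_right (s' - t) (p' - p)) a1,
        lt_min (by linarith : (0:ℝ) < s' - t) (by linarith : (0:ℝ) < p' - p)]
    · nlinarith [mul_le_mul_of_nonneg_right (min_le_left (s - t') (p - p'))
        (by linarith : (0:ℝ) ≤ 1 - q.2),
        mul_le_mul_of_nonneg_right (min_le_right (s - t') (p - p')) a1,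
        lt_min (by linarith : (0:ℝ) < s - t') (by linarith : (0:ℝ) < p - p')]
  · intro hsep
    push_neg at hsep
    obtain ⟨hs1, hs2⟩ := hsep
    rcases lt_trichotomy p p' with hp | hp | hp
    · have hts : s' ≤ t := hs1 hp
      rcases le_or_gt s t' with hst' | hst'
      · refine ⟨(max s s', 0), mem_STriangle_base (le_max_left _ _) (max_le h hts),
          mem_STriangle_base (le_max_right _ _) (max_le hst' h')⟩
      · -- crossing case: t' < s
        have hA0 : (0:ℝ) ≤ t - s' := by linarith
        have hB0 : (0:ℝ) < p' - p := by linarith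
        set y := (t - s') / ((t - s') + (p' - p)) with hy
        have hden : (0:ℝ) < (t - s') + (p' - p) := by linarith
        have hy0 : 0 ≤ y := div_nonneg hA0 hden.le
        have hy1 : y ≤ 1 := by
          rw [hy, div_le_one hden]; linarith
        have key : t * (1 - y) + p * y = s' * (1 - y) + p' * y := by
          have h1y : 1 - y = (p' - p) / ((t - s') + (p' - p)) := by
            rw [hy]; field_simp; ring
          rw [h1y, hy]; field_simp; ring
        refine ⟨(t * (1 - y) + p * y, y), mem_STriangle_comb' h le_rfl hy0 hy1, ?_⟩
        rw [key]
        exact mem_STriangle_comb' le_rfl h' hy0 hy1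
    · exact ⟨(p, 1), mem_STriangle_apex, hp ▸ mem_STriangle_apex⟩
    · have hts : s ≤ t' := hs2 hp
      rcases le_or_gt s' t with hst' | hst'
      · refine ⟨(max s s', 0), mem_STriangle_base (le_max_left _ _) (max_le h hst'),
          mem_STriangle_base (le_max_right _ _) (max_le hts h')⟩
      · have hA0 : (0:ℝ) ≤ t' - s := by linarith
        have hB0 : (0:ℝ) < p - p' := by linarith
        set y := (t' - s) / ((t' - s) + (p - p')) with hy
        have hden : (0:ℝ) < (t' - s) + (p - p') := by linarith
        have hy0 : 0 ≤ y := div_nonneg hA0 hden.le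
        have hy1 : y ≤ 1 := by
          rw [hy, div_le_one hden]; linarith
        have key : t' * (1 - y) + p' * y = s * (1 - y) + p * y := by
          have h1y : 1 - y = (p - p') / ((t' - s) + (p - p')) := by
            rw [hy]; field_simp; ring
          rw [h1y, hy]; field_simp; ring
        refine ⟨(t' * (1 - y) + p' * y, y), ?_, mem_STriangle_comb' h' le_rfl hy0 hy1⟩
        rw [key]
        exact mem_STriangle_comb' le_rfl h hy0 hy1

end Geometry
section Aux

/-- Separation of two simple triangles, as a relation on parameters. -/
def STSep (p s t : V → ℝ) (a b : V) : Prop :=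
  (p a < p b ∧ t a < s b) ∨ (p b < p a ∧ t b < s a)

/-- The lexicographic-style order used in the forward direction. -/
def STLt (p t : V → ℝ) (W : V → V → Prop) (a b : V) : Prop :=
  p a < p b ∨ (p a = p b ∧ (t b < t a ∨ (t a = t b ∧ W a b)))

lemma stlt_trans {p t : V → ℝ} {W : V → V → Prop}
    (hWtr : Transitive W) : Transitive (STLt p t W) := by
  rintro a b c (h | ⟨h1, h2⟩) (g | ⟨g1, g2⟩)
  · exact Or.inl (h.trans g)
  · exact Or.inl (g1 ▸ h)
  · exact Or.inl (h1 ▸ g)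
  · refine Or.inr ⟨h1.trans g1, ?_⟩
    rcases h2 with h2 | ⟨h2, h3⟩ <;> rcases g2 with g2 | ⟨g2, g3⟩
    · exact Or.inl (g2.trans h2)
    · exact Or.inl (g2 ▸ h2)
    · exact Or.inl (h2 ▸ g2)
    · exact Or.inr ⟨h2.trans g2, hWtr h3 g3⟩

lemma stlt_irrefl {p t : V → ℝ} {W : V → V → Prop}
    (hWirr : Irreflexive W) : Irreflexive (STLt p t W) := by
  rintro a (h | ⟨h1, h | ⟨h2, h3⟩⟩)
  · exact lt_irrefl _ h
  · exact lt_irrefl _ h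
  · exact hWirr a h3

lemma stlt_total {p t : V → ℝ} {W : V → V → Prop}
    (hWtot : ∀ a b : V, a ≠ b → W a b ∨ W b a) :
    ∀ a b : V, a ≠ b → STLt p t W a b ∨ STLt p t W b a := by
  intro a b hab
  rcases lt_trichotomy (p a) (p b) with h | h | h
  · exact Or.inl (Or.inl h)
  · rcases lt_trichotomy (t a) (t b) with g | g | g
    · exact Or.inr (Or.inr ⟨h.symm, Or.inl g⟩)
    · rcases hWtot a b hab with w | w
      · exact Or.inl (Or.inr ⟨h, Or.inr ⟨g, w⟩⟩)
      · exact Or.inr (Or.inr ⟨h.symm, Or.inr ⟨g.symm, w⟩⟩)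
    · exact Or.inl (Or.inr ⟨h, Or.inl g⟩)
  · exact Or.inr (Or.inl h)

/-- The key geometric fact about chordless 4-cycles in a triangle representation. -/
lemma st_geoC4 {p s t : V → ℝ} {W : V → V → Prop} {u v w x : V}
    (hst : ∀ y, s y ≤ t y)
    (nsuv : ¬ STSep p s t u v) (nsvw : ¬ STSep p s t v w)
    (nswx : ¬ STSep p s t w x) (nsxu : ¬ STSep p s t x u)
    (suw : STSep p s t u w) (svx : STSep p s t v x)
    (hLuv : STLt p t W u v) (hLvw : STLt p t W v w) : False := by
  have hpuv : p u ≤ p v := by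
    rcases hLuv with h | ⟨h, _⟩; exacts [h.le, h.le]
  have hpvw : p v ≤ p w := by
    rcases hLvw with h | ⟨h, _⟩; exacts [h.le, h.le]
  have huw : p u < p w ∧ t u < s w := by
    rcases suw with h | ⟨h1, _⟩
    · exact h
    · linarith
  rcases svx with ⟨hpvx, htvsx⟩ | ⟨hpxv, htxsv⟩
  · -- v left of x
    have hsxtu : s x ≤ t u := by
      by_contra hc
      push_neg at hc
      exact (not_or.mp nsxu).2 ⟨by linarith, hc⟩
    rcases hLvw with h | ⟨h1, h2⟩
    · exact (not_or.mp nsvw).1 ⟨h, by linarith⟩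
    · have : t v < t w := by linarith [hst w]
      rcases h2 with h2 | ⟨h2, _⟩ <;> linarith
  · -- x left of v
    have hswtx : s w ≤ t x := by
      by_contra hc
      push_neg at hc
      exact (not_or.mp nswx).2 ⟨by linarith, hc⟩
    rcases hLuv with h | ⟨h1, h2⟩
    · exact (not_or.mp nsuv).1 ⟨h, by linarith⟩
    · have : t u < t v := by linarith [hst v]
      rcases h2 with h2 | ⟨h2, _⟩ <;> linarith
end Aux
lemma mk4 (G : SimpleGraph V) (u0 u1 v0 v1 : V) (h01 : G.Adj u0 u1) (h12 : G.Adj u1 v0)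
    (h23 : G.Adj v0 v1) (h30 : G.Adj v1 u0) (n1 : ¬ G.Adj u0 v0) (n2 : ¬ G.Adj u1 v1)
    (d1 : u0 ≠ v0) (d2 : u1 ≠ v1) :
    ∃ c : ZMod 4 → V, IsChordlessCycle G 4 c ∧
      c 0 = u0 ∧ c 1 = u1 ∧ c 2 = v0 ∧ c 3 = v1 := by
  have e01 : u0 ≠ u1 := G.ne_of_adj h01
  have e12 : u1 ≠ v0 := G.ne_of_adj h12
  have e23 : v0 ≠ v1 := G.ne_of_adj h23
  have e30 : v1 ≠ u0 := G.ne_of_adj h30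
  refine ⟨fun i => if i = 0 then u0 else if i = 1 then u1 else if i = 2 then v0 else v1,
    ⟨?_, ?_, ?_⟩, rfl, rfl, rfl, rfl⟩
  · intro i j h
    fin_cases i <;> fin_cases j <;>
      first
        | rfl
        | exact absurd h e01 | exact absurd h e01.symm
        | exact absurd h e12 | exact absurd h e12.symm
        | exact absurd h e23 | exact absurd h e23.symm
        | exact absurd h e30 | exact absurd h e30.symm
        | exact absurd h d1 | exact absurd h d1.symm
        | exact absurd h d2 | exact absurd h d2.symm
  · intro i
    fin_cases i <;> first | exact h01 | exact h12 | exact h23 | exact h30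
  · intro i j h1 h2 h3
    fin_cases i <;> fin_cases j <;>
      first
        | exact absurd rfl h1 | exact absurd rfl h2 | exact absurd rfl h3
        | exact n1 | exact n2
        | exact fun hh => n1 (G.adj_symm hh) | exact fun hh => n2 (G.adj_symm hh)

section NLC
variable {G : SimpleGraph V} {O' : V → V → Prop} {n : ℕ}

lemma zmod_cast_ne_zero {k n : ℕ} (hk : 0 < k) (hkn : k < n) : (k : ZMod n) ≠ 0 := by
  haveI : NeZero n := ⟨by omega⟩
  intro h
  rw [ZMod.natCast_eq_zero_iff] at h
  have := Nat.le_of_dvd hk h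
  omega

/-- Core of the no-long-chordless-cycle lemma: a directed `O'` chord `c i0 → c (i0+2)`
leads to a contradiction. -/
lemma nlc_main (hor : IsOrientation Gᶜ O') (htr : ∀ u v w, O' u v → O' v w → O' u w)
    (hn : 5 ≤ n) (c : ZMod n → V) (hc : IsChordlessCycle G n c)
    (i0 : ZMod n) (h0 : O' (c i0) (c (i0 + 2))) : False := by
  haveI : NeZero n := ⟨by omega⟩
  have h2 : (2 : ZMod n) ≠ 0 := by
    have := zmod_cast_ne_zero (k := 2) (n := n) (by norm_num) (by omega); simpa using this
  have h3 : (3 : ZMod n) ≠ 0 := by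
    have := zmod_cast_ne_zero (k := 3) (n := n) (by norm_num) (by omega); simpa using this
  have h4 : (4 : ZMod n) ≠ 0 := by
    have := zmod_cast_ne_zero (k := 4) (n := n) (by norm_num) (by omega); simpa using this
  have hO'nadj : ∀ u v, O' u v → ¬ G.Adj u v ∧ u ≠ v := by
    intro u v h
    have := hor.1 u v h
    rw [SimpleGraph.compl_adj] at this
    exact ⟨this.2, this.1⟩
  have hO'tot : ∀ u v, ¬ G.Adj u v → u ≠ v → O' u v ∨ O' v u := by
    intro u v hn hne
    have hadj : Gᶜ.Adj u v := by rw [SimpleGraph.compl_adj]; exact ⟨hne, hn⟩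
    by_cases h : O' u v
    · exact Or.inl h
    · exact Or.inr ((hor.2 v u hadj.symm).mpr h)
  -- nonadjacency of vertices at distance 2 and 3 on the cycle
  have hna2 : ∀ i : ZMod n, ¬ G.Adj (c i) (c (i + 2)) := by
    intro i
    refine hc.2.2 i (i + 2) ?_ ?_ ?_
    · intro h; exact h2 (by linear_combination -h)
    · intro h; exact (zmod_cast_ne_zero (k := 1) (n := n) (by norm_num) (by omega))
        (by push_cast; linear_combination -h)
    · intro h; exact h3 (by linear_combination h)
  have hna3 : ∀ i : ZMod n, ¬ G.Adj (c i) (c (i + 3)) := by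
    intro i
    refine hc.2.2 i (i + 3) ?_ ?_ ?_
    · intro h; exact h3 (by linear_combination -h)
    · intro h; exact h2 (by linear_combination -h)
    · intro h; exact h4 (by linear_combination h)
  have hne2 : ∀ i : ZMod n, c i ≠ c (i + 2) := by
    intro i h
    exact h2 (by linear_combination -(hc.1 h))
  have hne3 : ∀ i : ZMod n, c i ≠ c (i + 3) := by
    intro i h
    exact h3 (by linear_combination -(hc.1 h))
  -- the crank
  have crank : ∀ i : ZMod n, O' (c i) (c (i + 2)) → O' (c (i + 1)) (c (i + 3)) := by
    intro i hi
    rcases hO'tot (c (i+1)) (c (i+3)) (by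
        have := hna2 (i+1); rw [show i+1+2 = i+3 by ring] at this; exact this)
      (by have := hne2 (i+1); rw [show i+1+2 = i+3 by ring] at this; exact this) with h | h
    · exact h
    · exfalso
      rcases hO'tot (c i) (c (i+3)) (hna3 i) (hne3 i) with g | g
      · have := htr _ _ _ g h
        exact (hO'nadj _ _ this).1 (hc.2.1 i)
      · have := htr _ _ _ g hi
        have hadj : G.Adj (c (i+2)) (c (i+3)) := by
          have := hc.2.1 (i+2); rw [show i+2+1 = i+3 by ring] at this; exact this
        exact (hO'nadj _ _ this).1 hadj.symm
  -- crank along the cycle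
  have all : ∀ m : ℕ, O' (c (i0 + m)) (c (i0 + m + 2)) := by
    intro m
    induction m with
    | zero => simpa using h0
    | succ k ih =>
      have := crank (i0 + k) ih
      rw [show i0 + k + 1 = i0 + (k+1 : ℕ) by push_cast; ring,
        show i0 + k + 3 = i0 + (k+1 : ℕ) + 2 by push_cast; ring] at this
      exact this
  -- chain around
  have chain : ∀ m : ℕ, O' (c i0) (c (i0 + ((2 * (m + 1) : ℕ) : ZMod n))) := by
    intro m
    induction m with
    | zero =>
      have e : ((2 * (0 + 1) : ℕ) : ZMod n) = 2 := by push_cast; ring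
      rw [e]; exact h0
    | succ k ih =>
      have h1 := all (2 * (k + 1))
      have h2' := htr _ _ _ ih h1
      rw [show i0 + ((2 * (k + 1) : ℕ) : ZMod n) + 2
          = i0 + ((2 * (k + 1 + 1) : ℕ) : ZMod n) by push_cast; ring] at h2'
      exact h2'
  have hfin := chain (n - 1)
  have e : ((2 * (n - 1 + 1) : ℕ) : ZMod n) = 0 := by
    rw [show n - 1 + 1 = n by omega]
    push_cast [ZMod.natCast_self]
    ring
  rw [e, add_zero] at hfin
  exact (hO'nadj _ _ hfin).2 rfl

/-- No chordless cycle of length at least 5 exists when the complement has a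
transitive orientation. -/
lemma no_long_cycle (hor : IsOrientation Gᶜ O') (htr : ∀ u v w, O' u v → O' v w → O' u w)
    (hn : 5 ≤ n) (c : ZMod n → V) (hc : IsChordlessCycle G n c) : False := by
  haveI : NeZero n := ⟨by omega⟩
  have h2 : (2 : ZMod n) ≠ 0 := by
    have := zmod_cast_ne_zero (k := 2) (n := n) (by norm_num) (by omega); simpa using this
  have h3 : (3 : ZMod n) ≠ 0 := by
    have := zmod_cast_ne_zero (k := 3) (n := n) (by norm_num) (by omega); simpa using this
  have hO'tot : ∀ u v, ¬ G.Adj u v → u ≠ v → O' u v ∨ O' v u := by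
    intro u v hnadj hne
    have hadj : Gᶜ.Adj u v := by rw [SimpleGraph.compl_adj]; exact ⟨hne, hnadj⟩
    by_cases h : O' u v
    · exact Or.inl h
    · exact Or.inr ((hor.2 v u hadj.symm).mpr h)
  have hna2 : ¬ G.Adj (c 0) (c 2) := by
    have := hc.2.2 0 (0 + 2) ?_ ?_ ?_
    · rw [zero_add] at this; exact this
    · intro h; exact h2 (by linear_combination -h)
    · intro h; exact (zmod_cast_ne_zero (k := 1) (n := n) (by norm_num) (by omega))
        (by push_cast; linear_combination -h)
    · intro h; exact h3 (by linear_combination h)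
  have hne2 : c 0 ≠ c 2 := by
    intro h
    have := hc.1 h
    exact h2 (by linear_combination -this)
  rcases hO'tot (c 0) (c 2) hna2 hne2 with h | h
  · exact nlc_main hor htr hn c hc 0 (by rw [zero_add]; exact h)
  · -- use the reversed cycle
    set d : ZMod n → V := fun j => c (2 - j) with hd
    have hcd : IsChordlessCycle G n d := by
      refine ⟨?_, ?_, ?_⟩
      · intro i j hij
        have : 2 - i = 2 - j := hc.1 hij
        linear_combination -this
      · intro i
        have h0 := hc.2.1 (2 - i - 1)
        rw [show 2 - i - 1 + 1 = 2 - i by ring] at h0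
        simp only [hd]
        rw [show (2 : ZMod n) - (i + 1) = 2 - i - 1 by ring]
        exact h0.symm
      · intro i j hij h1' h2'
        exact hc.2.2 (2 - i) (2 - j)
          (fun h => hij (by linear_combination -h))
          (fun h => h2' (by linear_combination h))
          (fun h => h1' (by linear_combination h))
    refine nlc_main hor htr hn d hcd 0 ?_
    show O' (c (2 - 0)) (c (2 - (0 + 2)))
    rw [show (2 : ZMod n) - (0 + 2) = 0 by ring, show (2 : ZMod n) - 0 = 2 by ring]
    exact h
end NLC
section K2
variable {G : SimpleGraph V} {O O' Λ : V → V → Prop}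

lemma k2_core
    (hAlt : IsAlternatingOrientation G O)
    (hΛasym : ∀ a b : V, Λ a b → ¬ Λ b a)
    (hOΛ : ∀ u v, O u v → Λ u v)
    (hO'nadj : ∀ u v, O' u v → ¬ G.Adj u v ∧ u ≠ v)
    (hO'tot : ∀ u v, ¬ G.Adj u v → u ≠ v → O' u v ∨ O' v u)
    (hO'tr : ∀ u v w, O' u v → O' v w → O' u w) :
    ∀ u0 v0 u1 v1, O' u0 v0 → G.Adj u1 v0 → Λ u1 v0 → O' u1 v1 →
      G.Adj u0 v1 → Λ u0 v1 → False := by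
  intro u0 v0 u1 v1 h00 ha1 hl1 h11 ha0 hl0
  have hOdir : ∀ a b, G.Adj a b → Λ a b → O a b := by
    intro a b hadj hab
    by_cases h : O a b
    · exact h
    · exact absurd (hOΛ _ _ ((hAlt.1.2 b a hadj.symm).mpr h)) (hΛasym _ _ hab)
  have n00 := hO'nadj _ _ h00
  have n11 := hO'nadj _ _ h11
  -- u0 adjacent to u1
  have h01 : G.Adj u0 u1 := by
    by_contra hn
    have hne : u0 ≠ u1 := by
      intro h; rw [h] at n00; exact n00.1 ha1
    rcases hO'tot _ _ hn hne with h | h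
    · exact (hO'nadj _ _ (hO'tr _ _ _ h h11)).1 ha0
    · exact (hO'nadj _ _ (hO'tr _ _ _ h h00)).1 ha1
  -- v0 adjacent to v1
  have hvv : G.Adj v0 v1 := by
    by_contra hn
    have hne : v0 ≠ v1 := by
      intro h; rw [← h] at ha0; exact n00.1 ha0
    rcases hO'tot _ _ hn hne with h | h
    · exact (hO'nadj _ _ (hO'tr _ _ _ h00 h)).1 ha0
    · exact (hO'nadj _ _ (hO'tr _ _ _ h11 h)).1 ha1
  obtain ⟨c, hc, c0, c1, c2, c3⟩ := mk4 G u0 u1 v0 v1 h01 ha1 hvv ha0.symm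
    n00.1 n11.1 n00.2 n11.2
  have alt1 := hAlt.2 4 le_rfl c hc 1
  have alt2 := hAlt.2 4 le_rfl c hc 2
  rw [show (1 + 1 : ZMod 4) = 2 by decide, show (1 + 2 : ZMod 4) = 3 by decide,
    c1, c2, c3] at alt1
  rw [show (2 + 1 : ZMod 4) = 3 by decide, show (2 + 2 : ZMod 4) = 0 by decide,
    c2, c3, c0] at alt2
  have o1 : O u1 v0 := hOdir _ _ ha1 hl1
  have o2 : O u0 v1 := hOdir _ _ ha0 hl0
  have l1 : Λ v1 v0 := hOΛ _ _ (alt1.mp o1)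
  have l2 : Λ v0 v1 := hOΛ _ _ (alt2.mpr o2)
  exact hΛasym _ _ l1 l2
end K2
def StepOE (G : SimpleGraph V) (Λ : V → V → Prop) (v u : V) : Prop :=
  (G.Adj u v ∧ Λ u v) ∨ u = v

def CycB (G : SimpleGraph V) (O' Λ : V → V → Prop) (k : ℕ) : Prop :=
  ∃ u v : ℕ → V, ∀ i < k, O' (u i) (v i) ∧ StepOE G Λ (v i) (u ((i + 1) % k))

/-- The endpoint constraint digraph: `inl v` is the left endpoint `s v`,
`inr u` the right endpoint `t u`. -/
def StepArc (G : SimpleGraph V) (O' Λ : V → V → Prop) : (V ⊕ V) → (V ⊕ V) → Prop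
  | Sum.inr u, Sum.inl v => O' u v
  | Sum.inl v, Sum.inr u => StepOE G Λ v u
  | _, _ => False

section Back
variable {G : SimpleGraph V} {O' Λ : V → V → Prop}


lemma cycB_surgery (hO'tr : ∀ u v w, O' u v → O' v w → O' u w)
    {k : ℕ} {u v : ℕ → V} (hk : 2 ≤ k)
    (hc : ∀ i < k, O' (u i) (v i) ∧ StepOE G Λ (v i) (u ((i + 1) % k)))
    {i0 : ℕ} (hi0 : i0 < k) (h0 : O' (u i0) (v ((i0 + 1) % k))) : CycB G O' Λ (k - 1) := by
  refine ⟨fun j => if j = 0 then u i0 else u ((i0 + 1 + j) % k),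
    fun j => v ((i0 + 1 + j) % k), ?_⟩
  intro j hj
  constructor
  · by_cases h : j = 0
    · subst h; simpa using h0
    · simp only [if_neg h]
      exact (hc ((i0 + 1 + j) % k) (Nat.mod_lt _ (by omega))).1
  · have hstep := (hc ((i0 + 1 + j) % k) (Nat.mod_lt _ (by omega))).2
    by_cases h : (j + 1) % (k - 1) = 0
    · -- wrap-around
      have hj1 : j + 1 = k - 1 := by
        by_contra hne
        have hlt : j + 1 < k - 1 := by omega
        rw [Nat.mod_eq_of_lt hlt] at h
        omega
      simp only [h, if_pos rfl]
      have : ((i0 + 1 + j) % k + 1) % k = i0 := by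
        rw [Nat.mod_add_mod]
        have : i0 + 1 + j + 1 = i0 + k := by omega
        rw [this, Nat.add_mod_right, Nat.mod_eq_of_lt hi0]
      rwa [this] at hstep
    · simp only [if_neg h]
      have hj2 : j + 1 ≠ k - 1 := by
        intro he; rw [he, Nat.mod_self] at h; exact h rfl
      have hj1 : (j + 1) % (k - 1) = j + 1 := Nat.mod_eq_of_lt (by omega)
      rw [hj1]
      have : ((i0 + 1 + j) % k + 1) % k = (i0 + 1 + (j + 1)) % k := by
        rw [Nat.mod_add_mod]; ring_nf
      rwa [this] at hstep

lemma no_cycB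
    (hΛirr : Irreflexive Λ) (hΛtr : Transitive Λ)
    (hΛtot : ∀ a b : V, a ≠ b → Λ a b ∨ Λ b a)
    (hO'nadj : ∀ u v, O' u v → ¬ G.Adj u v ∧ u ≠ v)
    (hO'tot : ∀ u v, ¬ G.Adj u v → u ≠ v → O' u v ∨ O' v u)
    (hO'Λ : ∀ u v, O' u v → Λ u v)
    (hO'tr : ∀ u v w, O' u v → O' v w → O' u w)
    (hk2 : ∀ u0 v0 u1 v1, O' u0 v0 → G.Adj u1 v0 → Λ u1 v0 → O' u1 v1 →
      G.Adj u0 v1 → Λ u0 v1 → False) :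
    ∀ k, 0 < k → ¬ CycB G O' Λ k := by
  intro k
  induction k using Nat.strong_induction_on with
  | _ k IH =>
  intro hk hcyc
  obtain ⟨u, v, hc⟩ := hcyc
  rcases Nat.lt_or_ge k 2 with hk1 | hk2'
  · -- k = 1
    have hke : k = 1 := by omega
    subst hke
    have h0 := hc 0 (by omega)
    have h1 : (0 + 1) % 1 = 0 := by norm_num
    rw [h1] at h0
    rcases h0.2 with ⟨hadj, _⟩ | heq
    · exact (hO'nadj _ _ h0.1).1 hadj
    · exact (hO'nadj _ _ h0.1).2 heq
  · by_cases hex : ∃ i < k, O' (u i) (v ((i + 1) % k))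
    · obtain ⟨i0, hi0, h0⟩ := hex
      exact IH (k - 1) (by omega) (by omega) (cycB_surgery hO'tr hk2' hc hi0 h0)
    · push_neg at hex
      have hB : ∀ i < k, G.Adj (u ((i + 1) % k)) (v i) ∧ Λ (u ((i + 1) % k)) (v i) := by
        intro i hi
        rcases (hc i hi).2 with h | h
        · exact h
        · exfalso
          have h1 := (hc ((i + 1) % k) (Nat.mod_lt _ (by omega))).1
          rw [h] at h1
          exact hex i hi (hO'tr _ _ _ (hc i hi).1 h1)
      have hAdj : ∀ i < k, G.Adj (u i) (v ((i + 1) % k)) := by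
        intro i hi
        have hi' : (i + 1) % k < k := Nat.mod_lt _ (by omega)
        by_contra hnadj
        have hne : u i ≠ v ((i + 1) % k) := by
          intro h
          have h1 := (hc ((i + 1) % k) hi').1
          rw [← h] at h1
          have h2 := hO'tr _ _ _ h1 (hc i hi).1
          exact (hO'nadj _ _ h2).1 (hB i hi).1
        rcases hO'tot _ _ hnadj hne with hx | hx
        · exact hex i hi hx
        · have h1 := hO'tr _ _ _ (hc ((i + 1) % k) hi').1 hx
          have h2 := hO'tr _ _ _ h1 (hc i hi).1
          exact (hO'nadj _ _ h2).1 (hB i hi).1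
      rcases Nat.eq_or_lt_of_le hk2' with hk2eq | hk3
      · -- k = 2
        subst hk2eq
        have e1 : (0 + 1) % 2 = 1 := by norm_num
        have e2 : (1 + 1) % 2 = 0 := by norm_num
        have hb0 := hB 0 (by omega)
        have hb1 := hB 1 (by omega)
        rw [e1] at hb0
        rw [e2] at hb1
        exact hk2 (u 0) (v 0) (u 1) (v 1) (hc 0 (by omega)).1 hb0.1 hb0.2
          (hc 1 (by omega)).1 hb1.1 hb1.2
      · -- k ≥ 3
        by_cases hex2 : ∃ i < k, Λ (u i) (v ((i + 1) % k))
        · obtain ⟨i, hi, hL⟩ := hex2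
          have hi' : (i + 1) % k < k := Nat.mod_lt _ (by omega)
          refine IH 2 (by omega) (by omega) ⟨fun j => if j = 0 then u i else u ((i + 1) % k),
            fun j => if j = 0 then v i else v ((i + 1) % k), ?_⟩
          intro j hj
          interval_cases j
          · refine ⟨by simpa using (hc i hi).1, ?_⟩
            simp only [if_pos rfl]
            have : (0 + 1) % 2 = 1 := by norm_num
            rw [this]
            simp only [if_neg one_ne_zero]
            exact Or.inl (hB i hi)
          · refine ⟨by simpa using (hc ((i + 1) % k) hi').1, ?_⟩
            have : (1 + 1) % 2 = 0 := by norm_num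
            rw [this]
            simp only [if_neg one_ne_zero, if_pos rfl]
            exact Or.inl ⟨hAdj i hi, hL⟩
        · push_neg at hex2
          have hdec : ∀ i < k, Λ (v ((i + 1) % k)) (v i) := by
            intro i hi
            have hne : u i ≠ v ((i + 1) % k) := G.ne_of_adj (hAdj i hi)
            rcases hΛtot _ _ hne with h | h
            · exact absurd h (hex2 i hi)
            · exact hΛtr h (hO'Λ _ _ (hc i hi).1)
          have hchain : ∀ j : ℕ, 1 ≤ j → j ≤ k → Λ (v (j % k)) (v 0) := by
            intro j
            induction j with
            | zero => omega
            | succ m ihm =>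
              intro _ hmk
              rcases Nat.eq_zero_or_pos m with hm | hm
              · subst hm
                simpa using hdec 0 (by omega)
              · have h1 := ihm (by omega) (by omega)
                have h2 := hdec (m % k) (Nat.mod_lt _ (by omega))
                rw [Nat.mod_add_mod] at h2
                exact hΛtr h2 h1
          have := hchain k (by omega) le_rfl
          rw [Nat.mod_self] at this
          exact hΛirr _ this
end Back
section Reach
variable {G : SimpleGraph V} {O' Λ : V → V → Prop}

/-- An open constraint chain from `s v` to `t u`. -/
def OpenR (G : SimpleGraph V) (O' Λ : V → V → Prop) (v u : V) : Prop :=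
  ∃ m : ℕ, ∃ uu vv : ℕ → V, 1 ≤ m ∧ vv 0 = v ∧ uu m = u ∧
    (∀ i, 1 ≤ i → i ≤ m → StepOE G Λ (vv (i - 1)) (uu i)) ∧
    (∀ i, 1 ≤ i → i < m → O' (uu i) (vv i))

/-- An open constraint chain from `s v` to `s v'`. -/
def OpenL (G : SimpleGraph V) (O' Λ : V → V → Prop) (v v' : V) : Prop :=
  ∃ m : ℕ, ∃ uu vv : ℕ → V, 1 ≤ m ∧ vv 0 = v ∧ vv m = v' ∧
    (∀ i, 1 ≤ i → i ≤ m → StepOE G Λ (vv (i - 1)) (uu i)) ∧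
    (∀ i, 1 ≤ i → i ≤ m → O' (uu i) (vv i))

lemma reach_decomp : ∀ a b, Relation.ReflTransGen (StepArc G O' Λ) a b →
    ∀ v : V, a = Sum.inl v →
      (∀ u, b = Sum.inr u → OpenR G O' Λ v u) ∧
      (∀ v', b = Sum.inl v' → v = v' ∨ OpenL G O' Λ v v') := by
  intro a b h
  induction h with
  | refl =>
    intro v hav
    constructor
    · intro u hbu; rw [hav] at hbu; exact absurd hbu (by simp)
    · intro v' hbv'; rw [hav] at hbv'; exact Or.inl (by injection hbv')
  | tail hab hbc ih =>
    rename_i b' c'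
    intro v hav
    constructor
    · -- c' = inr u
      intro u hcu
      subst hcu
      match b', hbc with
      | Sum.inl v1, hbc =>
        have hstep : StepOE G Λ v1 u := hbc
        rcases (ih v hav).2 v1 rfl with heq | ⟨m, uu, vv, hm, hv0, hvm, hsteps, hO's⟩
        · subst heq
          exact ⟨1, fun _ => u, fun _ => v, le_rfl, rfl, rfl,
            fun i _ _ => hstep, fun i h1 h2 => by omega⟩
        · refine ⟨m + 1, fun i => if i = m + 1 then u else uu i, vv, by omega, hv0, by simp, ?_, ?_⟩
          · intro i h1 h2
            show StepOE G Λ (vv (i - 1)) (if i = m + 1 then u else uu i)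
            rcases Nat.lt_or_ge i (m + 1) with h | h
            · rw [if_neg (by omega)]; exact hsteps i h1 (by omega)
            · have : i = m + 1 := by omega
              subst this
              rw [if_pos rfl, show m + 1 - 1 = m by omega, hvm]
              exact hstep
          · intro i h1 h2
            show O' (if i = m + 1 then u else uu i) (vv i)
            rw [if_neg (by omega)]
            exact hO's i h1 (by omega)
    · -- c' = inl v'
      intro v' hcv'
      subst hcv'
      match b', hbc with
      | Sum.inr u1, hbc =>
        have hO'uv : O' u1 v' := hbc
        obtain ⟨m, uu, vv, hm, hv0, hum, hsteps, hO's⟩ := (ih v hav).1 u1 rfl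
        refine Or.inr ⟨m, uu, fun i => if i = m then v' else vv i, hm, ?_, by simp, ?_, ?_⟩
        · show (if 0 = m then v' else vv 0) = v
          rw [if_neg (by omega)]; exact hv0
        · intro i h1 h2
          show StepOE G Λ (if i - 1 = m then v' else vv (i - 1)) (uu i)
          rw [if_neg (by omega)]
          exact hsteps i h1 h2
        · intro i h1 h2
          show O' (uu i) (if i = m then v' else vv i)
          rcases Nat.lt_or_ge i m with h | h
          · rw [if_neg (by omega)]; exact hO's i h1 h
          · have : i = m := by omega
            subst this
            rw [if_pos rfl, hum]
            exact hO'uv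

/-- If `O' u v` then there is no constraint path back from `s v` to `t u`,
provided there are no constraint cycles. -/
lemma no_return (hnc : ∀ k, 0 < k → ¬ CycB G O' Λ k) {u v : V} (h : O' u v) :
    ¬ Relation.ReflTransGen (StepArc G O' Λ) (Sum.inl v) (Sum.inr u) := by
  intro hr
  obtain ⟨m, uu, vv, hm, hv0, hum, hsteps, hO's⟩ :=
    (reach_decomp _ _ hr v rfl).1 u rfl
  refine hnc m (by omega) ⟨fun j => uu (j + 1),
    fun j => if j = m - 1 then v else vv (j + 1), ?_⟩
  intro j hj
  constructor
  · show O' (uu (j + 1)) (if j = m - 1 then v else vv (j + 1))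
    by_cases hje : j = m - 1
    · subst hje
      rw [if_pos rfl, show m - 1 + 1 = m by omega, hum]
      exact h
    · rw [if_neg hje]
      exact hO's (j + 1) (by omega) (by omega)
  · show StepOE G Λ (if j = m - 1 then v else vv (j + 1)) (uu ((j + 1) % m + 1))
    by_cases hje : j = m - 1
    · subst hje
      rw [if_pos rfl, show (m - 1 + 1) % m = 0 by
        rw [show m - 1 + 1 = m by omega]; exact Nat.mod_self m]
      have := hsteps 1 le_rfl (by omega)
      rw [show 1 - 1 = 0 by rfl, hv0] at this
      exact this
    · rw [if_neg hje, Nat.mod_eq_of_lt (by omega)]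
      have := hsteps (j + 2) (by omega) (by omega)
      rw [show j + 2 - 1 = j + 1 by omega] at this
      exact this
end Reach

theorem stmt12 {V : Type*} [Fintype V] (G : SimpleGraph V) :
    IsSimpleTriangleGraph G ↔
      ∃ O O' : V → V → Prop, IsAlternatingOrientation G O ∧
        IsTransitiveOrientation Gᶜ O' ∧
        Irreflexive (Relation.TransGen (fun u v => O u v ∨ O' u v)) := by
  classical
  constructor
  · rintro ⟨p, s, t, hst, hadjiff⟩
    have hWtr : Transitive (WellOrderingRel : V → V → Prop) := fun a b c hab hbc =>
      _root_.trans hab hbc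
    have hWirr : Irreflexive (WellOrderingRel : V → V → Prop) := fun a ha =>
      irrefl a ha
    have hWtot : ∀ a b : V, a ≠ b → WellOrderingRel a b ∨ WellOrderingRel b a := by
      intro a b hab
      rcases trichotomous_of WellOrderingRel a b with h | h | h
      · exact Or.inl h
      · exact absurd h hab
      · exact Or.inr h
    set W : V → V → Prop := WellOrderingRel with hW
    set L : V → V → Prop := STLt p t W with hL
    have hLtr : Transitive L := stlt_trans hWtr
    have hLirr : Irreflexive L := stlt_irrefl hWirr
    have hLtot : ∀ a b : V, a ≠ b → L a b ∨ L b a := stlt_total hWtot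
    have hLasym : ∀ a b : V, L a b → ¬ L b a := fun a b h h' => hLirr a (hLtr h h')
    have hLp : ∀ a b : V, L a b → p a ≤ p b := by
      rintro a b (h | ⟨h, _⟩); exacts [h.le, h.le]
    have hnsep : ∀ a b : V, G.Adj a b → ¬ STSep p s t a b := by
      intro a b hadj hs
      have h1 := (hadjiff a b).mp hadj
      rw [STriangle_inter_nonempty_iff (hst a) (hst b)] at h1
      exact h1.2 hs
    have hsep : ∀ a b : V, a ≠ b → ¬ G.Adj a b → STSep p s t a b := by
      intro a b hne hnadj
      by_contra hs
      apply hnadj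
      rw [hadjiff a b]
      refine ⟨hne, ?_⟩
      rw [STriangle_inter_nonempty_iff (hst a) (hst b)]
      exact hs
    set O : V → V → Prop := fun a b => G.Adj a b ∧ L a b with hO
    set O' : V → V → Prop := fun a b => ¬ G.Adj a b ∧ a ≠ b ∧ L a b with hO'
    have hLO : ∀ a b : V, O' a b → p a < p b ∧ t a < s b := by
      rintro a b ⟨hnadj, hne, hl⟩
      rcases hsep a b hne hnadj with h | h
      · exact h
      · exact absurd (hLp a b hl) (by push_neg; exact h.1)
    have hOor : IsOrientation G O := by
      refine ⟨fun u v h => h.1, fun u v hadj => ?_⟩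
      constructor
      · rintro ⟨_, hl⟩ ⟨_, hl'⟩
        exact hLasym _ _ hl hl'
      · intro hno
        refine ⟨hadj, ?_⟩
        rcases hLtot u v (G.ne_of_adj hadj) with h | h
        · exact h
        · exact absurd ⟨hadj.symm, h⟩ hno
    have hO'or : IsOrientation Gᶜ O' := by
      refine ⟨fun u v h => ?_, fun u v hadj => ?_⟩
      · rw [SimpleGraph.compl_adj]; exact ⟨h.2.1, h.1⟩
      · rw [SimpleGraph.compl_adj] at hadj
        constructor
        · rintro ⟨_, _, hl⟩ ⟨_, _, hl'⟩
          exact hLasym _ _ hl hl'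
        · intro hno
          refine ⟨hadj.2, hadj.1, ?_⟩
          rcases hLtot u v hadj.1 with h | h
          · exact h
          · exact absurd ⟨fun hh => hadj.2 hh.symm, hadj.1.symm, h⟩ hno
    have hO'tr : ∀ u v w : V, O' u v → O' v w → O' u w := by
      intro u v w h1 h2
      have l1 := hLO u v h1
      have l2 := hLO v w h2
      have lp : p u < p w := l1.1.trans l2.1
      have lt : t u < s w := by linarith [hst v]
      have hnadj : ¬ G.Adj u w := fun hadj => hnsep u w hadj (Or.inl ⟨lp, lt⟩)
      exact ⟨hnadj, fun h => absurd (h ▸ lp) (lt_irrefl _), Or.inl lp⟩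
    refine ⟨O, O', ⟨hOor, ?_⟩, ⟨hO'or, hO'tr⟩, ?_⟩
    · -- alternation
      intro n hn c hc i
      rcases eq_or_lt_of_le hn with h4 | h5
      · -- n = 4
        subst h4
        have adj01 := hc.2.1 i
        have adj12 : G.Adj (c (i + 1)) (c (i + 2)) := by
          have := hc.2.1 (i + 1)
          rwa [show i + 1 + 1 = i + 2 by ring] at this
        have adj23 : G.Adj (c (i + 2)) (c (i + 3)) := by
          have := hc.2.1 (i + 2)
          rwa [show i + 2 + 1 = i + 3 by ring] at this
        have adj30 : G.Adj (c (i + 3)) (c i) := by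
          have := hc.2.1 (i + 3)
          rwa [show i + 3 + 1 = i by
            have h40 : (4 : ZMod 4) = 0 := by decide
            linear_combination h40] at this
        have nonadj02 : ¬ G.Adj (c i) (c (i + 2)) := by
          refine hc.2.2 i (i + 2) ?_ ?_ ?_
          · intro h; exact (by decide : (2 : ZMod 4) ≠ 0) (by linear_combination -h)
          · intro h; exact (by decide : (1 : ZMod 4) ≠ 0) (by linear_combination -h)
          · intro h; exact (by decide : (3 : ZMod 4) ≠ 0) (by linear_combination h)
        have nonadj13 : ¬ G.Adj (c (i + 1)) (c (i + 3)) := by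
          refine hc.2.2 (i + 1) (i + 3) ?_ ?_ ?_
          · intro h; exact (by decide : (2 : ZMod 4) ≠ 0) (by linear_combination -h)
          · intro h; exact (by decide : (1 : ZMod 4) ≠ 0) (by linear_combination -h)
          · intro h; exact (by decide : (3 : ZMod 4) ≠ 0) (by linear_combination h)
        have ne02 : c i ≠ c (i + 2) := by
          intro h
          exact (by decide : (2 : ZMod 4) ≠ 0) (by linear_combination -(hc.1 h))
        have ne13 : c (i + 1) ≠ c (i + 3) := by
          intro h
          exact (by decide : (2 : ZMod 4) ≠ 0) (by linear_combination -(hc.1 h))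
        constructor
        · rintro ⟨_, l⟩
          refine ⟨adj12.symm, ?_⟩
          by_contra hnl
          rcases hLtot (c (i + 1)) (c (i + 2)) (G.ne_of_adj adj12) with l2 | l2
          · exact st_geoC4 hst (hnsep _ _ adj01) (hnsep _ _ adj12) (hnsep _ _ adj23)
              (hnsep _ _ adj30) (hsep _ _ ne02 nonadj02) (hsep _ _ ne13 nonadj13) l l2
          · exact hnl l2
        · rintro ⟨_, l⟩
          refine ⟨adj01, ?_⟩
          by_contra hnl
          rcases hLtot (c (i + 1)) (c i) (G.ne_of_adj adj01).symm with l2 | l2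
          · exact st_geoC4 hst (hnsep _ _ adj12.symm) (hnsep _ _ adj01.symm)
              (hnsep _ _ adj30.symm) (hnsep _ _ adj23.symm)
              (hsep _ _ (Ne.symm ne02) (fun h => nonadj02 h.symm))
              (hsep _ _ ne13 nonadj13) l l2
          · exact hnl l2
      · exact absurd hc (fun hcc => no_long_cycle hO'or hO'tr h5 c hcc)
    · -- acyclicity
      intro a ha
      have hsub : ∀ x y : V, (O x y ∨ O' x y) → L x y := by
        rintro x y (⟨_, h⟩ | ⟨_, _, h⟩) <;> exact h
      have := Relation.TransGen.mono hsub a a ha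
      rw [@Relation.transGen_eq_self _ L ⟨fun a b c h1 h2 => hLtr h1 h2⟩] at this
      exact hLirr a this
  · rintro ⟨O, O', hO, hO', hacyc⟩
    classical
    set U : V → V → Prop := fun u v => O u v ∨ O' u v with hU
    set r : V → V → Prop := fun a b => a = b ∨ Relation.TransGen U a b with hr
    haveI : IsPartialOrder V r :=
      { refl := fun a => Or.inl rfl
        trans := by
          rintro a b c (rfl | hab) (h | hbc)
          · exact Or.inl h
          · exact Or.inr hbc
          · exact Or.inr (h ▸ hab)
          · exact Or.inr (hab.trans hbc)
        antisymm := by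
          rintro a b (rfl | hab) (h | hba)
          · rfl
          · rfl
          · exact h.symm
          · exact absurd (hab.trans hba) (hacyc a) }
    obtain ⟨lin, hlin, hext⟩ := extend_partialOrder r
    haveI := hlin
    have hlintr : ∀ a b c : V, lin a b → lin b c → lin a c := fun a b c h1 h2 =>
      IsTrans.trans a b c h1 h2
    have hanti : ∀ a b : V, lin a b → lin b a → a = b := fun a b h1 h2 =>
      antisymm_of lin h1 h2
    have htot : ∀ a b : V, lin a b ∨ lin b a := fun a b => Std.Total.total a b
    set Λ : V → V → Prop := fun a b => lin a b ∧ a ≠ b with hΛ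
    have hΛirr : Irreflexive Λ := fun a h => h.2 rfl
    have hΛtr : Transitive Λ := by
      rintro a b c ⟨h1, n1⟩ ⟨h2, n2⟩
      refine ⟨hlintr _ _ _ h1 h2, fun he => ?_⟩
      subst he
      exact n1 (hanti _ _ h1 h2)
    have hΛtot : ∀ a b : V, a ≠ b → Λ a b ∨ Λ b a := fun a b hne =>
      (htot a b).imp (fun h => ⟨h, hne⟩) (fun h => ⟨h, hne.symm⟩)
    have hΛasym : ∀ a b : V, Λ a b → ¬ Λ b a := fun a b h h' => hΛirr a (hΛtr h h')
    have hO'nadj : ∀ u v, O' u v → ¬ G.Adj u v ∧ u ≠ v := by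
      intro u v h
      have := hO'.1.1 u v h
      rw [SimpleGraph.compl_adj] at this
      exact ⟨this.2, this.1⟩
    have hO'tot : ∀ u v, ¬ G.Adj u v → u ≠ v → O' u v ∨ O' v u := by
      intro u v hnadj hne
      have hadj : Gᶜ.Adj u v := by rw [SimpleGraph.compl_adj]; exact ⟨hne, hnadj⟩
      by_cases h : O' u v
      · exact Or.inl h
      · exact Or.inr ((hO'.1.2 v u hadj.symm).mpr h)
    have hO'tr : ∀ u v w : V, O' u v → O' v w → O' u w := hO'.2
    have hOΛ : ∀ u v, O u v → Λ u v := by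
      intro u v h
      exact ⟨hext _ _ (Or.inr (Relation.TransGen.single (Or.inl h))),
        G.ne_of_adj (hO.1.1 _ _ h)⟩
    have hO'Λ : ∀ u v, O' u v → Λ u v := by
      intro u v h
      exact ⟨hext _ _ (Or.inr (Relation.TransGen.single (Or.inr h))), (hO'nadj _ _ h).2⟩
    have hk2 := k2_core hO hΛasym hOΛ hO'nadj hO'tot hO'tr
    have hnc := no_cycB hΛirr hΛtr hΛtot hO'nadj hO'tot hO'Λ hO'tr hk2
    set R : (V ⊕ V) → (V ⊕ V) → Prop := Relation.ReflTransGen (StepArc G O' Λ) with hR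
    set f : (V ⊕ V) → ℝ := fun w => ((Finset.univ.filter fun w' => R w' w).card : ℝ) with hf
    have hfmono : ∀ w w', StepArc G O' Λ w w' → f w ≤ f w' := by
      intro w w' harc
      have hsub : (Finset.univ.filter fun x => R x w) ⊆ Finset.univ.filter fun x => R x w' := by
        intro x hx
        rw [Finset.mem_filter] at hx ⊢
        exact ⟨Finset.mem_univ x, hx.2.tail harc⟩
      simp only [hf]
      exact_mod_cast Finset.card_le_card hsub
    have hfstrict : ∀ u v : V, O' u v → f (Sum.inr u) < f (Sum.inl v) := by
      intro u v h
      have harc : StepArc G O' Λ (Sum.inr u) (Sum.inl v) := h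
      have hsub : (Finset.univ.filter fun x => R x (Sum.inr u)) ⊆
          Finset.univ.filter fun x => R x (Sum.inl v) := by
        intro x hx
        rw [Finset.mem_filter] at hx ⊢
        exact ⟨Finset.mem_univ x, hx.2.tail harc⟩
      have hmem : (Sum.inl v : V ⊕ V) ∈ Finset.univ.filter fun x => R x (Sum.inl v) := by
        rw [Finset.mem_filter]
        exact ⟨Finset.mem_univ _, Relation.ReflTransGen.refl⟩
      have hnmem : (Sum.inl v : V ⊕ V) ∉ Finset.univ.filter fun x => R x (Sum.inr u) := by
        rw [Finset.mem_filter]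
        rintro ⟨-, hret⟩
        exact no_return hnc h hret
      simp only [hf]
      exact_mod_cast Finset.card_lt_card ⟨hsub, fun hcon => hnmem (hcon hmem)⟩
    set pp : V → ℝ := fun v => ((Finset.univ.filter fun x => Λ x v).card : ℝ) with hpp
    have hpmono : ∀ a b : V, Λ a b → pp a < pp b := by
      intro a b h
      have hsub : (Finset.univ.filter fun x => Λ x a) ⊆ Finset.univ.filter fun x => Λ x b := by
        intro x hx
        rw [Finset.mem_filter] at hx ⊢
        exact ⟨Finset.mem_univ x, hΛtr hx.2 h⟩
      have hmem : a ∈ Finset.univ.filter fun x => Λ x b := by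
        rw [Finset.mem_filter]; exact ⟨Finset.mem_univ _, h⟩
      have hnmem : a ∉ Finset.univ.filter fun x => Λ x a := by
        rw [Finset.mem_filter]; rintro ⟨-, hh⟩; exact hΛirr a hh
      simp only [hpp]
      exact_mod_cast Finset.card_lt_card ⟨hsub, fun hcon => hnmem (hcon hmem)⟩
    set ss : V → ℝ := fun v => f (Sum.inl v) with hss
    set tt : V → ℝ := fun v => f (Sum.inr v) with htt
    have hstle : ∀ v, ss v ≤ tt v := fun v =>
      hfmono _ _ (show StepOE G Λ v v from Or.inr rfl)
    have hB : ∀ u v, G.Adj u v → Λ u v → ss v ≤ tt u := fun u v ha hl =>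
      hfmono _ _ (show StepOE G Λ v u from Or.inl ⟨ha, hl⟩)
    refine ⟨pp, ss, tt, hstle, ?_⟩
    intro a b
    rw [STriangle_inter_nonempty_iff (hstle a) (hstle b)]
    constructor
    · intro hadj
      refine ⟨G.ne_of_adj hadj, ?_⟩
      rintro (⟨hp, hts⟩ | ⟨hp, hts⟩)
      · rcases hΛtot a b (G.ne_of_adj hadj) with hl | hl
        · exact absurd hts (not_lt.mpr (hB _ _ hadj hl))
        · exact absurd hp (not_lt.mpr (hpmono _ _ hl).le)
      · rcases hΛtot a b (G.ne_of_adj hadj) with hl | hl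
        · exact absurd hp (not_lt.mpr (hpmono _ _ hl).le)
        · exact absurd hts (not_lt.mpr (hB _ _ hadj.symm hl))
    · rintro ⟨hne, hnsep⟩
      by_contra hnadj
      rcases hO'tot _ _ hnadj hne with h | h
      · exact hnsep (Or.inl ⟨hpmono _ _ (hO'Λ _ _ h), hfstrict _ _ h⟩)
      · exact hnsep (Or.inr ⟨hpmono _ _ (hO'Λ _ _ h), hfstrict _ _ h⟩)
end
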